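/- arXiv:1705.05266 — 9 statements merged into one kernel-verified Lean document; each statement's English description precedes it below -/
import Mathlib

section
/- Let u ∈ N and v ∈ V with v ≠ 0. The bounded linear operator T : V⁻ → V⁻ defined by ⟨Th, φ⟩_V = a(h,φ) − ∂²_{vv}b(u,v)[h,φ] for h, φ ∈ V⁻ satisfies ⟨Th, h⟩_V ≤ −‖h‖_V² for all h ∈ V⁻; in particular T is a bijection of V⁻ with bounded inverse. -/
/-!
Along every line `t ↦ v + t • h` the derivative `t ↦ ∂_v b(u, v + t • h)[h]` is monotone, because
the gradient `w ↦ f(u, |w|) w` of a radial potential with nonnegative nondecreasing profile is a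
monotone operator. Hence `∂²_{vv} b(u, v)[h, h] ≥ 0`, and on `V⁻`, where `a(h, h) = -‖h‖²`, this makes
`-T` coercive; Lax–Milgram on the closed subspace `V⁻` then gives bijectivity, and the coercivity
bound itself gives `‖h‖ ≤ ‖T h‖`.
-/

open scoped InnerProductSpace

section Radial

variable {E : Type*} [NormedAddCommGroup E] [InnerProductSpace ℝ E] {g : ℝ → ℝ}

theorem inner_smul_norm_sub_smul_norm_sub_nonneg (hg₀ : ∀ t, 0 ≤ t → 0 ≤ g t)
    (hg : MonotoneOn g (Set.Ici 0)) (x y : E) :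
    0 ≤ ⟪g ‖y‖ • y - g ‖x‖ • x, y - x⟫_ℝ := by
  have hx := norm_nonneg x
  have hy := norm_nonneg y
  have hgx := hg₀ _ hx
  have hgy := hg₀ _ hy
  have hmono : 0 ≤ (‖y‖ - ‖x‖) * (g ‖y‖ - g ‖x‖) := by
    rcases le_total ‖x‖ ‖y‖ with hxy | hyx
    · exact mul_nonneg (sub_nonneg.2 hxy) (sub_nonneg.2 (hg hx hy hxy))
    · exact mul_nonneg_of_nonpos_of_nonpos (sub_nonpos.2 hyx) (sub_nonpos.2 (hg hy hx hyx))
  have hexpand : ⟪g ‖y‖ • y - g ‖x‖ • x, y - x⟫_ℝ =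
      g ‖y‖ * ‖y‖ ^ 2 + g ‖x‖ * ‖x‖ ^ 2 - (g ‖y‖ + g ‖x‖) * ⟪x, y⟫_ℝ := by
    rw [inner_sub_left, inner_sub_right, inner_sub_right, real_inner_smul_left,
      real_inner_smul_left, real_inner_smul_left, real_inner_smul_left,
      real_inner_self_eq_norm_sq, real_inner_self_eq_norm_sq, real_inner_comm x y]
    ring
  rw [hexpand]
  -- Cauchy–Schwarz reduces the claim to `(‖y‖ - ‖x‖) (g ‖y‖ ‖y‖ - g ‖x‖ ‖x‖) ≥ 0`.
  nlinarith [mul_le_mul_of_nonneg_left (real_inner_le_norm x y) (add_nonneg hgx hgy),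
    mul_nonneg hgy (sq_nonneg (‖y‖ - ‖x‖)), mul_nonneg hmono hx]

theorem monotone_inner_smul_norm_add_smul (hg₀ : ∀ t, 0 ≤ t → 0 ≤ g t)
    (hg : MonotoneOn g (Set.Ici 0)) (x y : E) :
    Monotone fun t : ℝ => ⟪g ‖x + t • y‖ • (x + t • y), y⟫_ℝ := by
  intro s t hst
  rcases hst.eq_or_lt with rfl | hlt
  · exact le_rfl
  have hkey := inner_smul_norm_sub_smul_norm_sub_nonneg hg₀ hg (x + s • y) (x + t • y)
  rw [show x + t • y - (x + s • y) = (t - s) • y by rw [sub_smul]; abel, real_inner_smul_right,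
    inner_sub_left] at hkey
  exact sub_nonneg.1 (nonneg_of_mul_nonneg_right hkey (sub_pos.2 hlt))

end Radial

theorem fderiv_apply_nonneg_of_monotone {E : Type*} [NormedAddCommGroup E] [NormedSpace ℝ E]
    {G : E → ℝ} {v h : E} (hG : Monotone fun t : ℝ => G (v + t • h)) :
    0 ≤ fderiv ℝ G v h := by
  by_cases hd : DifferentiableAt ℝ G v
  · have hline : HasDerivAt (fun t : ℝ => v + t • h) h 0 := by
      simpa using ((hasDerivAt_id (0 : ℝ)).smul_const h).const_add v
    have hderiv : HasDerivAt (fun t : ℝ => G (v + t • h)) (fderiv ℝ G v h) 0 := by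
      have hG' : HasFDerivAt G (fderiv ℝ G v) (v + (0 : ℝ) • h) := by
        simpa using hd.hasFDerivAt
      exact hG'.comp_hasDerivAt 0 hline
    rw [← hderiv.deriv]
    exact hG.deriv_nonneg
  · simp [fderiv_zero_of_not_differentiableAt hd]

theorem fderiv_fderiv_apply_self_nonneg_of_radial_gradient
    {V W : Type*} [NormedAddCommGroup V] [NormedSpace ℝ V]
    [NormedAddCommGroup W] [InnerProductSpace ℝ W] (ι : V →L[ℝ] W)
    {b : V → ℝ} {g : ℝ → ℝ} (hg₀ : ∀ t, 0 ≤ t → 0 ≤ g t) (hg : MonotoneOn g (Set.Ici 0))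
    (hgrad : ∀ v h : V, fderiv ℝ b v h = g ‖ι v‖ * ⟪ι v, ι h⟫_ℝ) (v h : V) :
    0 ≤ fderiv ℝ (fun w => fderiv ℝ b w h) v h := by
  refine fderiv_apply_nonneg_of_monotone ?_
  simpa only [hgrad, map_add, map_smul, real_inner_smul_left]
    using monotone_inner_smul_norm_add_smul hg₀ hg (ι v) (ι h)

section Coercive

variable {E : Type*} [NormedAddCommGroup E] [InnerProductSpace ℝ E]

theorem norm_le_of_inner_le_neg_norm_sq {x y : E} (h : ⟪y, x⟫_ℝ ≤ -‖x‖ ^ 2) : ‖x‖ ≤ ‖y‖ := by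
  have hsq : ‖x‖ * ‖x‖ ≤ ‖y‖ * ‖x‖ := by
    nlinarith [neg_le_abs ⟪y, x⟫_ℝ, abs_real_inner_le_norm y x]
  rcases (norm_nonneg x).eq_or_lt with hx | hx
  · rw [← hx]
    exact norm_nonneg y
  · exact le_of_mul_le_mul_right hsq hx

theorem ContinuousLinearMap.surjective_of_isCoercive_innerSL_comp [CompleteSpace E]
    (S : E →L[ℝ] E) (hS : IsCoercive ((innerSL ℝ : E →L[ℝ] E →L[ℝ] ℝ) ∘L S)) :
    Function.Surjective S := by
  have hsharp :
      InnerProductSpace.continuousLinearMapOfBilin ((innerSL ℝ : E →L[ℝ] E →L[ℝ] ℝ) ∘L S) = S :=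
    ContinuousLinearMap.ext fun v =>
      (InnerProductSpace.unique_continuousLinearMapOfBilin _ fun w => rfl).symm
  rw [← hsharp]
  exact LinearMap.range_eq_top.1 hS.range_eq_top

theorem ContinuousLinearMap.bijOn_of_inner_le_neg_norm_sq (K : Submodule ℝ E) [CompleteSpace K]
    (T : E →L[ℝ] E) (hTK : ∀ x ∈ K, T x ∈ K) (hT : ∀ x ∈ K, ⟪T x, x⟫_ℝ ≤ -‖x‖ ^ 2) :
    Set.BijOn T K K := by
  refine ⟨hTK, fun x hx y hy hxy => ?_, fun y hy => ?_⟩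
  · have hbound := norm_le_of_inner_le_neg_norm_sq (hT (x - y) (K.sub_mem hx hy))
    rw [map_sub, hxy, sub_self, norm_zero] at hbound
    exact sub_eq_zero.1 (norm_le_zero_iff.1 hbound)
  · let S : K →L[ℝ] K := (-T).restrict fun x hx => K.neg_mem (hTK x hx)
    have hS : IsCoercive ((innerSL ℝ : K →L[ℝ] K →L[ℝ] ℝ) ∘L S) := by
      refine ⟨1, one_pos, fun x => ?_⟩
      change 1 * ‖(x : E)‖ * ‖(x : E)‖ ≤ ⟪-T x, (x : E)⟫_ℝ
      rw [inner_neg_left]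
      nlinarith [hT x x.2]
    obtain ⟨x, hx⟩ := S.surjective_of_isCoercive_innerSL_comp hS ⟨-y, K.neg_mem hy⟩
    exact ⟨x, x.2, neg_injective (congrArg Subtype.val hx)⟩

end Coercive

theorem stmt_3_general
    {W : Type*} [NormedAddCommGroup W] [InnerProductSpace ℝ W]
    {V : Type*} [NormedAddCommGroup V] [InnerProductSpace ℝ V] [CompleteSpace V]
    (ι : V →L[ℝ] W)
    (Pp Pm : V →L[ℝ] V)
    (hP_sum : ∀ v : V, Pp v + Pm v = v)
    (a : V →L[ℝ] V →L[ℝ] ℝ)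
    (ha : ∀ v w : V, a v w = ⟪Pp v, Pp w⟫_ℝ - ⟪Pm v, Pm w⟫_ℝ)
    {N : Type*}
    (b : N → V → ℝ) (f : N → ℝ → ℝ)
    (hf_mono : ∀ u : N, StrictMonoOn (f u) (Set.Ici (0:ℝ)))
    (hf_nonneg : ∀ (u : N) (t : ℝ), 0 ≤ t → 0 ≤ f u t)
    (hgrad : ∀ (u : N) (v h : V), fderiv ℝ (b u) v h = f u ‖ι v‖ * ⟪ι v, ι h⟫_ℝ)
    (u : N) (v : V)
    (T : V →L[ℝ] V)
    (hT_range : ∀ h : V, Pm h = h → Pm (T h) = T h)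
    (hT_def : ∀ h φ : V, Pm h = h → Pm φ = φ →
      ⟪T h, φ⟫_ℝ = a h φ - fderiv ℝ (fun w => fderiv ℝ (b u) w h) v φ) :
    (∀ h : V, Pm h = h → ⟪T h, h⟫_ℝ ≤ -‖h‖ ^ 2) ∧
    Set.BijOn T {x : V | Pm x = x} {x : V | Pm x = x} ∧
    ∃ C : ℝ, 0 < C ∧ ∀ h : V, Pm h = h → ‖h‖ ≤ C * ‖T h‖ := by
  have hcoer : ∀ h : V, Pm h = h → ⟪T h, h⟫_ℝ ≤ -‖h‖ ^ 2 := by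
    intro h hh
    have hPp : Pp h = 0 := by simpa [hh] using hP_sum h
    rw [hT_def h h hh hh, ha, hPp, hh, inner_zero_left, real_inner_self_eq_norm_sq]
    linarith [fderiv_fderiv_apply_self_nonneg_of_radial_gradient ι (hf_nonneg u)
      (hf_mono u).monotoneOn (hgrad u) v h]
  let K : Submodule ℝ V :=
    (Pm : V →ₗ[ℝ] V).eqLocus (ContinuousLinearMap.id ℝ V : V →ₗ[ℝ] V)
  refine ⟨hcoer, T.bijOn_of_inner_le_neg_norm_sq K hT_range hcoer, 1, one_pos, fun h hh => ?_⟩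
  simpa using norm_le_of_inner_le_neg_norm_sq (hcoer h hh)

theorem stmt_3
    {W : Type*} [NormedAddCommGroup W] [InnerProductSpace ℝ W] [CompleteSpace W]
    {V : Type*} [NormedAddCommGroup V] [InnerProductSpace ℝ V] [CompleteSpace V]
    (ι : V →L[ℝ] W) (hι : Function.Injective ι)
    (c : ℝ) (hc : 0 < c) (hιc : ∀ v : V, ‖ι v‖ ≤ c * ‖v‖)
    (Pp Pm : V →L[ℝ] V)
    (hP_sum : ∀ v : V, Pp v + Pm v = v)
    (hPp_idem : ∀ v : V, Pp (Pp v) = Pp v)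
    (hPm_idem : ∀ v : V, Pm (Pm v) = Pm v)
    (hP_orth : ∀ v w : V, ⟪Pp v, Pm w⟫_ℝ = 0)
    (a : V →L[ℝ] V →L[ℝ] ℝ)
    (ha : ∀ v w : V, a v w = ⟪Pp v, Pp w⟫_ℝ - ⟪Pm v, Pm w⟫_ℝ)
    {N : Type*} [NormedAddCommGroup N] [InnerProductSpace ℝ N] [CompleteSpace N]
    (p : ℝ) (hp : 1 < p)
    (b : N → V → ℝ) (f : N → ℝ → ℝ)
    (hb_C2 : ContDiff ℝ 2 (fun q : N × V => b q.1 q.2))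
    (hb_zero : ∀ u : N, b u 0 = 0)
    (hb_nonneg : ∀ (u : N) (v : V), 0 ≤ b u v)
    (hf_cont : ContinuousOn (fun q : N × ℝ => f q.1 q.2) (Set.univ ×ˢ Set.Ici (0:ℝ)))
    (hf_zero : ∀ u : N, f u 0 = 0)
    (hf_mono : ∀ u : N, StrictMonoOn (f u) (Set.Ici (0:ℝ)))
    (hf_nonneg : ∀ (u : N) (t : ℝ), 0 ≤ t → 0 ≤ f u t)
    (hgrad : ∀ (u : N) (v h : V), fderiv ℝ (b u) v h = f u ‖ι v‖ * ⟪ι v, ι h⟫_ℝ)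
    (C₂ : ℝ → ℝ) (hC₂_cont : ContinuousOn C₂ (Set.Ici (0:ℝ)))
    (hC₂_pos : ∀ t : ℝ, 0 ≤ t → 0 < C₂ t)
    (hbII : ∀ (u : N) (v h k : V),
      |fderiv ℝ (fun w => fderiv ℝ (b u) w h) v k| ≤ C₂ ‖u‖ * ‖ι v‖ ^ (p - 1) * ‖ι h‖ * ‖ι k‖)
    (u : N) (v : V) (hv : v ≠ 0)
    (T : V →L[ℝ] V)
    (hT_range : ∀ h : V, Pm h = h → Pm (T h) = T h)
    (hT_def : ∀ h φ : V, Pm h = h → Pm φ = φ →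
      ⟪T h, φ⟫_ℝ = a h φ - fderiv ℝ (fun w => fderiv ℝ (b u) w h) v φ) :
    (∀ h : V, Pm h = h → ⟪T h, h⟫_ℝ ≤ -‖h‖ ^ 2) ∧
    Set.BijOn T {x : V | Pm x = x} {x : V | Pm x = x} ∧
    ∃ C : ℝ, 0 < C ∧ ∀ h : V, Pm h = h → ‖h‖ ≤ C * ‖T h‖ :=
  stmt_3_general ι Pp Pm hP_sum a ha b f hf_mono hf_nonneg hgrad u v T hT_range hT_def
end

section
/- For every u ∈ N and every v ∈ V with P⁺v ≠ 0, there exists R > 0 such that E₂(u,w) ≤ 0 for all w ∈ F_u(v) with ‖w‖_V ≥ R. -/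
/-!
Argue by contradiction: take `zₙ = tₙ v + wₙ` in the cone with `‖zₙ‖ → ∞` and `E₂(u, zₙ) > 0`.
Since `b ≥ 0`, positive energy forces `‖P⁻zₙ‖ < ‖P⁺zₙ‖`, so `‖zₙ‖ ≤ 2 ‖P⁺zₙ‖`; as `P⁺zₙ = tₙ P⁺v`,
this gives `⟪zₙ, P⁺v⟫ ≥ ‖P⁺v‖ ‖zₙ‖ / 2`. Hence a weak limit of `zₙ / ‖zₙ‖` pairs positively with
`P⁺v` and is nonzero, and then superquadraticity of `b` contradicts `b(u, zₙ) < ‖zₙ‖² / 2`.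
-/

open scoped InnerProductSpace
open Filter Topology

section HilbertSpace

variable {V : Type*} [NormedAddCommGroup V] [InnerProductSpace ℝ V] [CompleteSpace V]

theorem exists_strictMono_weakly_tendsto {x : ℕ → V} {B : ℝ} (hB : ∀ n, ‖x n‖ ≤ B) :
    ∃ (x₀ : V) (φ : ℕ → ℕ), StrictMono φ ∧
      ∀ y : V, Tendsto (fun k => ⟪x (φ k), y⟫_ℝ) atTop (𝓝 ⟪x₀, y⟫_ℝ) := by
  -- Pass to the separable closed span of the sequence, where sequential Banach–Alaoglu applies.
  set M := (Submodule.span ℝ (Set.range x)).topologicalClosure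
  have : CompleteSpace M := (Submodule.isClosed_topologicalClosure _).completeSpace_coe
  have : TopologicalSpace.SeparableSpace M := by
    refine TopologicalSpace.IsSeparable.separableSpace ?_
    exact ((Set.countable_range x).isSeparable.span (R := ℝ)).closure
  have hxM : ∀ n, x n ∈ M := fun n =>
    Submodule.le_topologicalClosure _ (Submodule.subset_span ⟨n, rfl⟩)
  let g : ℕ → WeakDual ℝ M := fun n =>
    StrongDual.toWeakDual (InnerProductSpace.toDual ℝ M ⟨x n, hxM n⟩)
  have hg : ∀ n, g n ∈ WeakDual.toStrongDual ⁻¹' Metric.closedBall 0 B := fun n =>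
    mem_closedBall_zero_iff.2 <| ((InnerProductSpace.toDual ℝ M).norm_map _).trans_le (hB n)
  obtain ⟨ℓ, -, φ, hφ, hlim⟩ := WeakDual.isSeqCompact_closedBall ℝ M 0 B hg
  refine ⟨(InnerProductSpace.toDual ℝ M).symm (WeakDual.toStrongDual ℓ), φ, hφ, fun y => ?_⟩
  have hpair : ∀ z : M, Tendsto (fun k => ⟪(⟨x (φ k), hxM _⟩ : M), z⟫_ℝ) atTop
      (𝓝 ⟪(InnerProductSpace.toDual ℝ M).symm (WeakDual.toStrongDual ℓ), z⟫_ℝ) := fun z => by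
    rw [InnerProductSpace.toDual_symm_apply]
    exact tendsto_iff_forall_eval_tendsto_topDualPairing.mp hlim z
  simpa only [Submodule.inner_orthogonalProjectionOnto_eq_of_mem_left] using
    hpair (M.orthogonalProjectionOnto y)

theorem exists_mul_norm_sq_lt_of_superquadratic {g : V → ℝ}
    (hg : ∀ (xs : ℕ → V) (x₀ : V), x₀ ≠ 0 →
      (∀ y : V, Tendsto (fun n => ⟪xs n, y⟫_ℝ) atTop (𝓝 ⟪x₀, y⟫_ℝ)) →
      ∀ s : ℕ → ℝ, Tendsto s atTop atTop → Tendsto (fun n => g (s n • xs n) / s n ^ 2) atTop atTop)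
    {w : ℕ → V} (hw : Tendsto (fun n => ‖w n‖) atTop atTop) {e : V} {δ : ℝ} (hδ : 0 < δ)
    (he : ∀ n, δ * ‖w n‖ ≤ ⟪w n, e⟫_ℝ) (C : ℝ) :
    ∃ n, C * ‖w n‖ ^ 2 < g (w n) := by
  set xs : ℕ → V := fun n => ‖w n‖⁻¹ • w n
  have hxs : ∀ n, ‖xs n‖ ≤ 1 := fun n => by
    simpa [xs, norm_smul] using inv_mul_le_one_of_le₀ le_rfl (norm_nonneg (w n))
  obtain ⟨x₀, φ, hφ, hweak⟩ := exists_strictMono_weakly_tendsto hxs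
  have hwφ : Tendsto (fun k => ‖w (φ k)‖) atTop atTop := hw.comp hφ.tendsto_atTop
  have hpos : ∀ᶠ k in atTop, 0 < ‖w (φ k)‖ := hwφ.eventually_gt_atTop 0
  have hx₀e : δ ≤ ⟪x₀, e⟫_ℝ := by
    refine ge_of_tendsto (hweak e) (hpos.mono fun k hk => ?_)
    rw [real_inner_smul_left, le_inv_mul_iff₀ hk, mul_comm]
    exact he (φ k)
  have hx₀ : x₀ ≠ 0 := by
    rintro rfl
    rw [inner_zero_left] at hx₀e
    linarith
  obtain ⟨k, hk_pos, hk⟩ :=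
    (hpos.and ((hg _ x₀ hx₀ hweak _ hwφ).eventually_gt_atTop C)).exists
  refine ⟨φ k, ?_⟩
  rwa [smul_inv_smul₀ hk_pos.ne', lt_div_iff₀ (by positivity)] at hk

end HilbertSpace

section OrthogonalSplitting

variable {V : Type*} [NormedAddCommGroup V] [InnerProductSpace ℝ V] {Pp Pm : V →L[ℝ] V}

theorem norm_sq_eq_norm_sq_add_norm_sq_of_orthogonal (hP_sum : ∀ v, Pp v + Pm v = v)
    (hP_orth : ∀ v w, ⟪Pp v, Pm w⟫_ℝ = 0) (z : V) :
    ‖z‖ ^ 2 = ‖Pp z‖ ^ 2 + ‖Pm z‖ ^ 2 := by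
  conv_lhs => rw [← hP_sum z]
  rw [norm_add_sq_real, hP_orth]
  ring

theorem inner_apply_right_eq_of_orthogonal (hP_sum : ∀ v, Pp v + Pm v = v)
    (hP_orth : ∀ v w, ⟪Pp v, Pm w⟫_ℝ = 0) (z v : V) :
    ⟪z, Pp v⟫_ℝ = ⟪Pp z, Pp v⟫_ℝ := by
  conv_lhs => rw [← hP_sum z]
  rw [inner_add_left, real_inner_comm (Pp v) (Pm z), hP_orth, add_zero]

theorem apply_apply_eq_zero_of_orthogonal (hP_sum : ∀ v, Pp v + Pm v = v)
    (hP_orth : ∀ v w, ⟪Pp v, Pm w⟫_ℝ = 0) (w : V) : Pp (Pm w) = 0 := by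
  rw [← inner_self_eq_zero (𝕜 := ℝ), ← inner_apply_right_eq_of_orthogonal hP_sum hP_orth, real_inner_comm, hP_orth]

theorem inner_smul_add_apply_eq_norm_mul_norm (hP_sum : ∀ v, Pp v + Pm v = v)
    (hP_orth : ∀ v w, ⟪Pp v, Pm w⟫_ℝ = 0) {t : ℝ} (ht : 0 ≤ t) (v : V) {w : V} (hw : Pm w = w) :
    ⟪t • v + w, Pp v⟫_ℝ = ‖Pp (t • v + w)‖ * ‖Pp v‖ := by
  have hPp : Pp (t • v + w) = t • Pp v := by
    rw [map_add, map_smul, ← hw, apply_apply_eq_zero_of_orthogonal hP_sum hP_orth, add_zero]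
  rw [inner_apply_right_eq_of_orthogonal hP_sum hP_orth, hPp, real_inner_smul_left,
    real_inner_self_eq_norm_sq, norm_smul, Real.norm_of_nonneg ht]
  ring

end OrthogonalSplitting

theorem stmt_5_general
    {V : Type*} [NormedAddCommGroup V] [InnerProductSpace ℝ V] [CompleteSpace V]
    (Pp Pm : V →L[ℝ] V)
    (hP_sum : ∀ v : V, Pp v + Pm v = v)
    (hP_orth : ∀ v w : V, ⟪Pp v, Pm w⟫_ℝ = 0)
    (a : V →L[ℝ] V →L[ℝ] ℝ)
    (ha : ∀ v w : V, a v w = ⟪Pp v, Pp w⟫_ℝ - ⟪Pm v, Pm w⟫_ℝ)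
    {N : Type*}
    (b : N → V → ℝ)
    (hb_nonneg : ∀ (u : N) (v : V), 0 ≤ b u v)
    (hb_super : ∀ (u : N) (vseq : ℕ → V) (v : V), v ≠ 0 →
      (∀ y : V, Tendsto (fun n => ⟪vseq n, y⟫_ℝ) atTop (𝓝 ⟪v, y⟫_ℝ)) →
      ∀ s : ℕ → ℝ, Tendsto s atTop atTop →
      Tendsto (fun n => b u (s n • vseq n) / (s n) ^ 2) atTop atTop)
    :
    ∀ (u : N) (v : V), Pp v ≠ 0 →
      ∃ R : ℝ, 0 < R ∧ ∀ (t : ℝ) (w : V), 0 ≤ t → Pm w = w →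
        R ≤ ‖t • v + w‖ →
        (1/2 : ℝ) * a (t • v + w) (t • v + w) - b u (t • v + w) ≤ 0 := by
  intro u v hv
  by_contra! hcon
  choose t w ht hw hR hE using fun n : ℕ => hcon ((n : ℝ) + 1) (by positivity)
  set z : ℕ → V := fun n => t n • v + w n
  have hpyth := norm_sq_eq_norm_sq_add_norm_sq_of_orthogonal hP_sum hP_orth
  have hE' : ∀ n, ‖Pm (z n)‖ ^ 2 + 2 * b u (z n) < ‖Pp (z n)‖ ^ 2 := fun n => by
    have := hE n
    rw [ha, real_inner_self_eq_norm_sq, real_inner_self_eq_norm_sq] at this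
    linarith
  have hz : Tendsto (fun n => ‖z n‖) atTop atTop :=
    tendsto_atTop_mono hR (tendsto_atTop_add_const_right _ 1 tendsto_natCast_atTop_atTop)
  have he : ∀ n, ‖Pp v‖ / 2 * ‖z n‖ ≤ ⟪z n, Pp v⟫_ℝ := fun n => by
    rw [inner_smul_add_apply_eq_norm_mul_norm hP_sum hP_orth (ht n) v (hw n)]
    have : ‖z n‖ ≤ 2 * ‖Pp (z n)‖ := by
      nlinarith [hpyth (z n), hE' n, hb_nonneg u (z n), norm_nonneg (z n), norm_nonneg (Pp (z n))]
    nlinarith [norm_nonneg (Pp v)]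
  obtain ⟨n, hn⟩ := exists_mul_norm_sq_lt_of_superquadratic (hb_super u) hz
    (half_pos (norm_pos_iff.2 hv)) he (1 / 2)
  nlinarith [hE' n, hpyth (z n)]

theorem stmt_5
    {W : Type*} [NormedAddCommGroup W] [InnerProductSpace ℝ W] [CompleteSpace W]
    {V : Type*} [NormedAddCommGroup V] [InnerProductSpace ℝ V] [CompleteSpace V]
    (ι : V →L[ℝ] W) (hι : Function.Injective ι)
    (c : ℝ) (hc : 0 < c) (hιc : ∀ v : V, ‖ι v‖ ≤ c * ‖v‖)
    (Pp Pm : V →L[ℝ] V)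
    (hP_sum : ∀ v : V, Pp v + Pm v = v)
    (hPp_idem : ∀ v : V, Pp (Pp v) = Pp v)
    (hPm_idem : ∀ v : V, Pm (Pm v) = Pm v)
    (hP_orth : ∀ v w : V, ⟪Pp v, Pm w⟫_ℝ = 0)
    (a : V →L[ℝ] V →L[ℝ] ℝ)
    (ha : ∀ v w : V, a v w = ⟪Pp v, Pp w⟫_ℝ - ⟪Pm v, Pm w⟫_ℝ)
    {N : Type*} [NormedAddCommGroup N] [InnerProductSpace ℝ N] [CompleteSpace N]
    (p : ℝ) (hp : 1 < p)
    (b : N → V → ℝ) (f : N → ℝ → ℝ)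
    (hb_C2 : ContDiff ℝ 2 (fun q : N × V => b q.1 q.2))
    (hb_zero : ∀ u : N, b u 0 = 0)
    (hb_nonneg : ∀ (u : N) (v : V), 0 ≤ b u v)
    (hf_cont : ContinuousOn (fun q : N × ℝ => f q.1 q.2) (Set.univ ×ˢ Set.Ici (0:ℝ)))
    (hf_zero : ∀ u : N, f u 0 = 0)
    (hf_mono : ∀ u : N, StrictMonoOn (f u) (Set.Ici (0:ℝ)))
    (hf_nonneg : ∀ (u : N) (t : ℝ), 0 ≤ t → 0 ≤ f u t)
    (hgrad : ∀ (u : N) (v h : V), fderiv ℝ (b u) v h = f u ‖ι v‖ * ⟪ι v, ι h⟫_ℝ)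
    (hb_wcont : ∀ (u : N) (vseq : ℕ → V) (v : V),
      (∀ y : V, Tendsto (fun n => ⟪vseq n, y⟫_ℝ) atTop (𝓝 ⟪v, y⟫_ℝ)) →
      Tendsto (fun n => b u (vseq n)) atTop (𝓝 (b u v)))
    (hb_super : ∀ (u : N) (vseq : ℕ → V) (v : V), v ≠ 0 →
      (∀ y : V, Tendsto (fun n => ⟪vseq n, y⟫_ℝ) atTop (𝓝 ⟪v, y⟫_ℝ)) →
      ∀ s : ℕ → ℝ, Tendsto s atTop atTop →
      Tendsto (fun n => b u (s n • vseq n) / (s n) ^ 2) atTop atTop)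
    :
    ∀ (u : N) (v : V), Pp v ≠ 0 →
      ∃ R : ℝ, 0 < R ∧ ∀ (t : ℝ) (w : V), 0 ≤ t → Pm w = w →
        R ≤ ‖t • v + w‖ →
        (1/2 : ℝ) * a (t • v + w) (t • v + w) - b u (t • v + w) ≤ 0 :=
  stmt_5_general Pp Pm hP_sum hP_orth a ha b hb_nonneg hb_super
end

section
/- For every u ∈ N and every v ∈ V with P⁺v ≠ 0, the supremum β = sup{E₂(u,w) : w ∈ F_u(v)} is finite and strictly positive, and it is attained at some w₀ ∈ F_u(v) (necessarily with P⁺w₀ ≠ 0). -/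
/-!
On `F = ℝ₊ v ⊕ V⁻` one has `P⁺ (t v + z) = t P⁺ v`, and the energy is
`E w = ½ ‖P⁺ w‖² - ½ ‖P⁻ w‖² - b u w`. Because `∇b(u, w) = f(u, |w|) w` with `f(u, 0) = 0`,
`b (u, ε P⁺ v) = o(ε²)`, so `E (ε P⁺ v) > 0` for small `ε > 0`. On `F ∩ {E ≥ 0}` we have
`‖P⁻ w‖ ≤ ‖P⁺ w‖`, and the superquadratic growth of `b` along weakly convergent sequences bounds
`t`; hence `F ∩ {E ≥ 0}` is bounded and a maximizing sequence has a weakly convergent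
subsequence. Along it `P⁺ w` converges strongly (it stays on a line), `b u` is weakly continuous
and `‖P⁻ w‖` is weakly lower semicontinuous, so the weak limit lies in `F` and is a maximizer.
-/

open scoped InnerProductSpace
open Filter Topology

section WeakConvergence

variable {V : Type*} [NormedAddCommGroup V] [InnerProductSpace ℝ V]

def WeaklyTendsto (w : ℕ → V) (w₀ : V) : Prop :=
  ∀ y : V, Tendsto (fun n => ⟪w n, y⟫_ℝ) atTop (𝓝 ⟪w₀, y⟫_ℝ)

theorem Filter.Tendsto.weaklyTendsto {w : ℕ → V} {w₀ : V} (h : Tendsto w atTop (𝓝 w₀)) :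
    WeaklyTendsto w w₀ :=
  fun _ => h.inner tendsto_const_nhds

namespace WeaklyTendsto

variable {w : ℕ → V} {w₀ : V}

theorem unique {w₁ : V} (h₀ : WeaklyTendsto w w₀) (h₁ : WeaklyTendsto w w₁) : w₀ = w₁ :=
  ext_inner_right ℝ fun y => tendsto_nhds_unique (h₀ y) (h₁ y)

theorem map {V' : Type*} [NormedAddCommGroup V'] [InnerProductSpace ℝ V'] [CompleteSpace V]
    [CompleteSpace V'] (h : WeaklyTendsto w w₀) (T : V →L[ℝ] V') :
    WeaklyTendsto (fun n => T (w n)) (T w₀) := fun y => by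
  simpa only [ContinuousLinearMap.adjoint_inner_right] using h (T.adjoint y)

theorem norm_sq_le {L : ℝ} (h : WeaklyTendsto w w₀)
    (hL : Tendsto (fun n => ‖w n‖ ^ 2) atTop (𝓝 L)) : ‖w₀‖ ^ 2 ≤ L := by
  have hlim : Tendsto (fun n => 2 * ⟪w n, w₀⟫_ℝ - ‖w₀‖ ^ 2) atTop (𝓝 (‖w₀‖ ^ 2)) := by
    have := ((h w₀).const_mul 2).sub_const (‖w₀‖ ^ 2)
    rwa [real_inner_self_eq_norm_sq, two_mul, add_sub_cancel_right] at this
  refine le_of_tendsto_of_tendsto' hlim hL fun n => ?_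
  nlinarith [real_inner_le_norm (w n) w₀, sq_nonneg (‖w n‖ - ‖w₀‖)]

end WeaklyTendsto

theorem exists_strictMono_weaklyTendsto [CompleteSpace V] {w : ℕ → V} {M : ℝ}
    (hM : ∀ n, ‖w n‖ ≤ M) :
    ∃ (w₀ : V) (φ : ℕ → ℕ), StrictMono φ ∧ WeaklyTendsto (w ∘ φ) w₀ := by
  set K : Submodule ℝ V := (Submodule.span ℝ (Set.range w)).topologicalClosure
  have hwK : ∀ n, w n ∈ K :=
    fun n => Submodule.le_topologicalClosure _ (Submodule.subset_span ⟨n, rfl⟩)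
  have : CompleteSpace K := (Submodule.isClosed_topologicalClosure _).completeSpace_coe
  have : TopologicalSpace.SeparableSpace K :=
    (Set.countable_range w).isSeparable.span.closure.separableSpace
  let ℓ : ℕ → WeakDual ℝ K :=
    fun n => StrongDual.toWeakDual (InnerProductSpace.toDual ℝ K ⟨w n, hwK n⟩)
  have hℓ : ∀ n, ℓ n ∈ WeakDual.toStrongDual ⁻¹' Metric.closedBall 0 M := fun n => by
    rw [Set.mem_preimage, StrongDual.toStrongDual_toWeakDual]
    exact mem_closedBall_zero_iff.mpr
      (((InnerProductSpace.toDual ℝ K).norm_map _).trans_le (hM n))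
  obtain ⟨ℓ₀, -, φ, hφ, hlim⟩ :=
    (WeakDual.isSeqCompact_closedBall ℝ K 0 M).subseq_of_frequently_in (.of_forall hℓ)
  refine ⟨((InnerProductSpace.toDual ℝ K).symm ℓ₀.toStrongDual : V), φ, hφ, fun y => ?_⟩
  set y' : K := ⟨K.starProjection y, K.starProjection_apply_mem y⟩
  have hproj : ∀ z ∈ K, ⟪z, y⟫_ℝ = ⟪z, y'⟫_ℝ := fun z hz => by
    rw [← Submodule.inner_starProjection_left_eq_right,
      Submodule.starProjection_eq_self_iff.mpr hz]
  have hy' := ((WeakDual.eval_continuous y').tendsto ℓ₀).comp hlim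
  rw [hproj _ (Submodule.coe_mem _), ← Submodule.coe_inner, InnerProductSpace.toDual_symm_apply]
  simp only [Function.comp_def, hproj _ (hwK _)]
  exact hy'

theorem exists_isMaxOn_of_weaklyTendsto [CompleteSpace V] {S : Set V} {g : V → ℝ}
    (hbdd : BddAbove (g '' S)) {w₁ : V} (hw₁ : w₁ ∈ S) {R : ℝ}
    (hR : ∀ w ∈ S, g w₁ ≤ g w → ‖w‖ ≤ R)
    (husc : ∀ (w : ℕ → V) (w₀ : V) (L : ℝ), (∀ n, w n ∈ S) → WeaklyTendsto w w₀ →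
      Tendsto (fun n => g (w n)) atTop (𝓝 L) → w₀ ∈ S ∧ L ≤ g w₀) :
    ∃ w₀ ∈ S, IsMaxOn g S w₀ := by
  set S' := {w ∈ S | g w₁ ≤ g w}
  have hbdd' : BddAbove (g '' S') := hbdd.mono (Set.image_mono (Set.sep_subset _ _))
  have hw₁' : g w₁ ∈ g '' S' := ⟨w₁, ⟨hw₁, le_rfl⟩, rfl⟩
  obtain ⟨u, -, hlim, hmem⟩ := exists_seq_tendsto_sSup ⟨_, hw₁'⟩ hbdd'
  choose w hwS' hw using hmem
  obtain ⟨w₀, φ, hφ, hwφ⟩ :=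
    exists_strictMono_weaklyTendsto fun n => hR _ (hwS' n).1 (hwS' n).2
  obtain ⟨hw₀, hsup⟩ := husc (w ∘ φ) w₀ _ (fun n => (hwS' _).1) hwφ
    (by simpa only [Function.comp_def, hw] using hlim.comp hφ.tendsto_atTop)
  refine ⟨w₀, hw₀, fun w hw => ?_⟩
  by_cases h : g w₁ ≤ g w
  · exact (le_csSup hbdd' ⟨w, ⟨hw, h⟩, rfl⟩).trans hsup
  · exact (not_le.mp h).le.trans ((le_csSup hbdd' hw₁').trans hsup)

end WeakConvergence

section SplitEnergy

variable {V : Type*} [NormedAddCommGroup V] [InnerProductSpace ℝ V] {Pp Pm : V →L[ℝ] V}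
  {a : V →L[ℝ] V →L[ℝ] ℝ} {β : V → ℝ} {v : V}

/-- The set `F_u(v) = ℝ₊ v ⊕ V⁻` of the paper, with `V⁻` the fixed points of `Pm`. -/
def halfCone (Pm : V →L[ℝ] V) (v : V) : Set V :=
  {w | ∃ (t : ℝ) (z : V), 0 ≤ t ∧ Pm z = z ∧ w = t • v + z}

/-- The paper's `E₂(u, ·)` when `β = b u`. -/
noncomputable def energy (a : V →L[ℝ] V →L[ℝ] ℝ) (β : V → ℝ) (w : V) : ℝ :=
  (1/2 : ℝ) * a w w - β w

theorem apply_eq_self_iff_of_add_eq (hP_sum : ∀ v, Pp v + Pm v = v) {z : V} :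
    Pm z = z ↔ Pp z = 0 := by
  rw [← add_eq_right (a := Pp z), hP_sum, eq_comm]

theorem apply_smul_add_of_apply_eq_self (hP_sum : ∀ v, Pp v + Pm v = v) {z : V} (hz : Pm z = z)
    (t : ℝ) (v : V) :
    Pp (t • v + z) = t • Pp v := by
  rw [map_add, map_smul, (apply_eq_self_iff_of_add_eq hP_sum).mp hz, add_zero]

theorem energy_eq (ha : ∀ v w, a v w = ⟪Pp v, Pp w⟫_ℝ - ⟪Pm v, Pm w⟫_ℝ) (w : V) :
    energy a β w = 1/2 * ‖Pp w‖ ^ 2 - 1/2 * ‖Pm w‖ ^ 2 - β w := by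
  rw [energy, ha, real_inner_self_eq_norm_sq, real_inner_self_eq_norm_sq]
  ring

theorem energy_le (ha : ∀ v w, a v w = ⟪Pp v, Pp w⟫_ℝ - ⟪Pm v, Pm w⟫_ℝ) (hβ : ∀ w, 0 ≤ β w)
    (w : V) : energy a β w ≤ 1/2 * ‖Pp w‖ ^ 2 := by
  rw [energy_eq ha]
  nlinarith [hβ w, sq_nonneg ‖Pm w‖]

theorem norm_le_of_energy_nonneg (hP_sum : ∀ v, Pp v + Pm v = v)
    (ha : ∀ v w, a v w = ⟪Pp v, Pp w⟫_ℝ - ⟪Pm v, Pm w⟫_ℝ) (hβ : ∀ w, 0 ≤ β w) {w : V}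
    (hw : 0 ≤ energy a β w) : ‖w‖ ≤ 2 * ‖Pp w‖ := by
  rw [energy_eq ha] at hw
  have hPm : ‖Pm w‖ ≤ ‖Pp w‖ := by
    nlinarith [hβ w, norm_nonneg (Pm w), norm_nonneg (Pp w)]
  calc ‖w‖ = ‖Pp w + Pm w‖ := by rw [hP_sum]
    _ ≤ ‖Pp w‖ + ‖Pm w‖ := norm_add_le _ _
    _ ≤ 2 * ‖Pp w‖ := by linarith

theorem exists_energy_pos (hP_sum : ∀ v, Pp v + Pm v = v) (hPp_idem : ∀ v, Pp (Pp v) = Pp v)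
    (ha : ∀ v w, a v w = ⟪Pp v, Pp w⟫_ℝ - ⟪Pm v, Pm w⟫_ℝ) (hv : Pp v ≠ 0)
    (hsmall : ∀ δ > 0, ∀ᶠ ε in 𝓝[>] 0, β (ε • Pp v) < δ * ε ^ 2) :
    ∃ w ∈ halfCone Pm v, 0 < energy a β w := by
  have hx : 0 < ‖Pp v‖ ^ 2 := by positivity
  obtain ⟨ε, hβε, hε⟩ :=
    ((hsmall (1/2 * ‖Pp v‖ ^ 2) (by positivity)).and self_mem_nhdsWithin).exists
  have hPm : Pm (Pp v) = 0 := by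
    simpa only [hPp_idem, add_eq_left] using hP_sum (Pp v)
  refine ⟨ε • Pp v, ⟨ε, ε • Pp v - ε • v, le_of_lt hε, ?_, by abel⟩, ?_⟩
  · rw [apply_eq_self_iff_of_add_eq hP_sum, map_sub, map_smul, map_smul, hPp_idem, sub_self]
  · rw [energy_eq ha, map_smul, map_smul, hPp_idem, hPm, smul_zero, norm_zero, norm_smul,
      Real.norm_eq_abs, abs_of_pos hε]
    nlinarith

variable [CompleteSpace V]

/-- On `halfCone Pm v` the map `Pp` takes values in the line `ℝ • Pp v`, where weak and strong
convergence agree. -/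
theorem WeaklyTendsto.mem_halfCone (hP_sum : ∀ v, Pp v + Pm v = v) (hv : Pp v ≠ 0)
    {w : ℕ → V} {w₀ : V} (hw : ∀ n, w n ∈ halfCone Pm v) (hlim : WeaklyTendsto w w₀) :
    w₀ ∈ halfCone Pm v ∧ Tendsto (fun n => Pp (w n)) atTop (𝓝 (Pp w₀)) := by
  choose t z ht hz hwtz using hw
  have hPpw : ∀ n, Pp (w n) = t n • Pp v := fun n => by
    rw [hwtz n, apply_smul_add_of_apply_eq_self hP_sum (hz n)]
  have hx : ‖Pp v‖ ^ 2 ≠ 0 := by positivity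
  set t₀ := ⟪Pp w₀, Pp v⟫_ℝ / ‖Pp v‖ ^ 2
  have htlim : Tendsto t atTop (𝓝 t₀) := by
    have := (hlim.map Pp (Pp v)).div_const (‖Pp v‖ ^ 2)
    simpa only [hPpw, real_inner_smul_left, real_inner_self_eq_norm_sq, mul_div_cancel_right₀ _ hx]
      using this
  have hPplim : Tendsto (fun n => Pp (w n)) atTop (𝓝 (t₀ • Pp v)) := by
    simpa only [hPpw] using htlim.smul_const (Pp v)
  have hPpw₀ : Pp w₀ = t₀ • Pp v := (hlim.map Pp).unique hPplim.weaklyTendsto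
  refine ⟨⟨t₀, w₀ - t₀ • v, ge_of_tendsto' htlim ht, ?_, by abel⟩, hPpw₀ ▸ hPplim⟩
  rw [apply_eq_self_iff_of_add_eq hP_sum, map_sub, map_smul, hPpw₀, sub_self]

theorem WeaklyTendsto.le_energy (ha : ∀ v w, a v w = ⟪Pp v, Pp w⟫_ℝ - ⟪Pm v, Pm w⟫_ℝ)
    {w : ℕ → V} {w₀ : V} {L : ℝ} (hlim : WeaklyTendsto w w₀)
    (hPp : Tendsto (fun n => Pp (w n)) atTop (𝓝 (Pp w₀)))
    (hβ : Tendsto (fun n => β (w n)) atTop (𝓝 (β w₀)))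
    (hL : Tendsto (fun n => energy a β (w n)) atTop (𝓝 L)) : L ≤ energy a β w₀ := by
  have hPm : Tendsto (fun n => ‖Pm (w n)‖ ^ 2) atTop (𝓝 (‖Pp w₀‖ ^ 2 - 2 * β w₀ - 2 * L)) := by
    have := ((hPp.norm.pow 2).sub (hβ.const_mul 2)).sub (hL.const_mul 2)
    refine this.congr fun n => ?_
    rw [energy_eq ha]
    ring
  have := (hlim.map Pm).norm_sq_le hPm
  rw [energy_eq ha]
  linarith

theorem not_tendsto_atTop_of_energy_nonneg (hP_sum : ∀ v, Pp v + Pm v = v)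
    (ha : ∀ v w, a v w = ⟪Pp v, Pp w⟫_ℝ - ⟪Pm v, Pm w⟫_ℝ) (hβ : ∀ w, 0 ≤ β w)
    (hsuper : ∀ (w : ℕ → V) (w₀ : V), w₀ ≠ 0 → WeaklyTendsto w w₀ →
      ∀ s : ℕ → ℝ, Tendsto s atTop atTop → Tendsto (fun n => β (s n • w n) / s n ^ 2) atTop atTop)
    (hv : Pp v ≠ 0) {t : ℕ → ℝ} {z : ℕ → V} (ht : ∀ n, 0 < t n) (hz : ∀ n, Pm (z n) = z n)
    (hE : ∀ n, 0 ≤ energy a β (t n • v + z n)) : ¬Tendsto t atTop atTop := by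
  intro htop
  set w := fun n => t n • v + z n
  have hPpw : ∀ n, Pp (w n) = t n • Pp v :=
    fun n => apply_smul_add_of_apply_eq_self hP_sum (hz n) _ _
  -- rescaled to have `Pp`-part `Pp v`, the sequence stays bounded and its weak limit is nonzero
  set u := fun n => (t n)⁻¹ • w n
  have hPpu : ∀ n, Pp (u n) = Pp v := fun n => by
    rw [map_smul, hPpw, inv_smul_smul₀ (ht n).ne']
  have hu : ∀ n, ‖u n‖ ≤ 2 * ‖Pp v‖ := fun n => calc
    ‖u n‖ = (t n)⁻¹ * ‖w n‖ := by rw [norm_smul, norm_inv, Real.norm_of_nonneg (ht n).le]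
    _ ≤ (t n)⁻¹ * (2 * ‖Pp (w n)‖) :=
      mul_le_mul_of_nonneg_left (norm_le_of_energy_nonneg hP_sum ha hβ (hE n))
        (inv_nonneg.mpr (ht n).le)
    _ = 2 * ‖Pp v‖ := by
      rw [hPpw, norm_smul, Real.norm_of_nonneg (ht n).le]; field_simp [(ht n).ne']
  obtain ⟨u₀, φ, hφ, hulim⟩ := exists_strictMono_weaklyTendsto hu
  have hu₀ : Pp u₀ = Pp v :=
    (hulim.map Pp).unique <| by
      simpa only [Function.comp_apply, hPpu] using tendsto_const_nhds.weaklyTendsto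
  have hu₀ne : u₀ ≠ 0 := fun h => hv (by rw [← hu₀, h, map_zero])
  obtain ⟨n, hn⟩ := ((hsuper _ u₀ hu₀ne hulim _ (htop.comp hφ.tendsto_atTop)).eventually_gt_atTop
    (1/2 * ‖Pp v‖ ^ 2)).exists
  have hβw : β (w (φ n)) ≤ 1/2 * ‖Pp v‖ ^ 2 * t (φ n) ^ 2 := by
    have := hE (φ n)
    rw [energy_eq ha, hPpw, norm_smul, Real.norm_of_nonneg (ht _).le] at this
    nlinarith [sq_nonneg ‖Pm (w (φ n))‖]
  simp only [Function.comp_apply, u, smul_inv_smul₀ (ht _).ne'] at hn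
  rw [lt_div_iff₀ (pow_pos (ht _) 2)] at hn
  linarith

theorem exists_norm_le_of_energy_nonneg (hP_sum : ∀ v, Pp v + Pm v = v)
    (ha : ∀ v w, a v w = ⟪Pp v, Pp w⟫_ℝ - ⟪Pm v, Pm w⟫_ℝ) (hβ : ∀ w, 0 ≤ β w)
    (hsuper : ∀ (w : ℕ → V) (w₀ : V), w₀ ≠ 0 → WeaklyTendsto w w₀ →
      ∀ s : ℕ → ℝ, Tendsto s atTop atTop → Tendsto (fun n => β (s n • w n) / s n ^ 2) atTop atTop)
    (hv : Pp v ≠ 0) :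
    ∃ T, ∀ w ∈ halfCone Pm v, 0 ≤ energy a β w → ‖Pp w‖ ≤ T := by
  by_contra! hcon
  choose w hwF hE hw using fun n : ℕ => hcon n
  choose t z ht hz hwtz using hwF
  have hx : 0 < ‖Pp v‖ := norm_pos_iff.mpr hv
  have hPpw : ∀ n, ‖Pp (w n)‖ = t n * ‖Pp v‖ := fun n => by
    rw [hwtz n, apply_smul_add_of_apply_eq_self hP_sum (hz n), norm_smul,
      Real.norm_of_nonneg (ht n)]
  have htpos : ∀ n, 0 < t n := fun n =>
    pos_of_mul_pos_left ((Nat.cast_nonneg n).trans_lt ((hw n).trans_eq (hPpw n))) hx.le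
  refine not_tendsto_atTop_of_energy_nonneg hP_sum ha hβ hsuper hv htpos hz
    (fun n => hwtz n ▸ hE n) (tendsto_atTop_mono (fun n => ?_)
      (tendsto_natCast_atTop_atTop.atTop_div_const hx))
  rw [div_le_iff₀ hx, ← hPpw]
  exact (hw n).le

theorem exists_isMaxOn_energy (hP_sum : ∀ v, Pp v + Pm v = v)
    (ha : ∀ v w, a v w = ⟪Pp v, Pp w⟫_ℝ - ⟪Pm v, Pm w⟫_ℝ) (hβ : ∀ w, 0 ≤ β w)
    (hβ_weak : ∀ (w : ℕ → V) (w₀ : V), WeaklyTendsto w w₀ →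
      Tendsto (fun n => β (w n)) atTop (𝓝 (β w₀)))
    (hsuper : ∀ (w : ℕ → V) (w₀ : V), w₀ ≠ 0 → WeaklyTendsto w w₀ →
      ∀ s : ℕ → ℝ, Tendsto s atTop atTop → Tendsto (fun n => β (s n • w n) / s n ^ 2) atTop atTop)
    (hv : Pp v ≠ 0) {w₁ : V} (hw₁ : w₁ ∈ halfCone Pm v) (hE₁ : 0 ≤ energy a β w₁) :
    ∃ w₀ ∈ halfCone Pm v, IsMaxOn (energy a β) (halfCone Pm v) w₀ := by
  obtain ⟨T, hT⟩ := exists_norm_le_of_energy_nonneg hP_sum ha hβ hsuper hv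
  refine exists_isMaxOn_of_weaklyTendsto (R := 2 * T) ⟨1/2 * T ^ 2, ?_⟩ hw₁ ?_ ?_
  · rintro _ ⟨w, hw, rfl⟩
    by_cases h : 0 ≤ energy a β w
    · nlinarith [energy_le ha hβ w, hT w hw h, norm_nonneg (Pp w)]
    · exact (not_le.mp h).le.trans (by positivity)
  · intro w hw hle
    have h0 := hE₁.trans hle
    linarith [norm_le_of_energy_nonneg hP_sum ha hβ h0, hT w hw h0]
  · intro w w₀ L hw hlim hL
    obtain ⟨hw₀, hPp⟩ := hlim.mem_halfCone hP_sum hv hw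
    exact ⟨hw₀, hlim.le_energy ha hPp (hβ_weak w w₀ hlim) hL⟩

end SplitEnergy

section SmallScale

variable {V W : Type*} [NormedAddCommGroup V] [NormedSpace ℝ V] [NormedAddCommGroup W]
  [InnerProductSpace ℝ W] {β : V → ℝ} {g : ℝ → ℝ}

theorem le_mul_sq_of_fderiv_eq (ι : V →L[ℝ] W) (hβ : Differentiable ℝ β) (hβ0 : β 0 = 0)
    (hβ' : ∀ v h, fderiv ℝ β v h = g ‖ι v‖ * ⟪ι v, ι h⟫_ℝ) (hg0 : g 0 = 0)
    (hg : MonotoneOn g (Set.Ici 0)) (x : V) {ε : ℝ} (hε : 0 ≤ ε) :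
    β (ε • x) ≤ g (ε * ‖ι x‖) * ‖ι x‖ ^ 2 * ε ^ 2 := by
  have hderiv : ∀ s, 0 ≤ s →
      HasDerivAt (fun s : ℝ => β (s • x)) (g (s * ‖ι x‖) * ‖ι x‖ ^ 2 * s) s := fun s hs => by
    refine ((hβ _).hasFDerivAt.comp_hasDerivAt s ((hasDerivAt_id s).smul_const x)).congr_deriv ?_
    simp only [id, one_smul, hβ', map_smul, norm_smul, Real.norm_of_nonneg hs,
      real_inner_smul_left, real_inner_self_eq_norm_sq]
    ring
  have hmono : ∀ s ∈ interior (Set.Icc 0 ε),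
      deriv (fun s : ℝ => β (s • x)) s ≤ g (ε * ‖ι x‖) * ‖ι x‖ ^ 2 * ε := fun s hs => by
    obtain ⟨hs0, hsε⟩ : 0 < s ∧ s < ε := by rwa [interior_Icc] at hs
    rw [(hderiv s hs0.le).deriv]
    have hgs : 0 ≤ g (s * ‖ι x‖) :=
      hg0 ▸ hg Set.self_mem_Ici (Set.mem_Ici.mpr (by positivity)) (by positivity)
    have hgε : g (s * ‖ι x‖) ≤ g (ε * ‖ι x‖) :=
      hg (Set.mem_Ici.mpr (by positivity)) (Set.mem_Ici.mpr (by positivity)) (by gcongr)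
    exact mul_le_mul (mul_le_mul_of_nonneg_right hgε (sq_nonneg _)) hsε.le hs0.le
      (mul_nonneg (hgs.trans hgε) (sq_nonneg _))
  have := (convex_Icc 0 ε).image_sub_le_mul_sub_of_deriv_le
    (fun s hs => (hderiv s hs.1).continuousAt.continuousWithinAt)
    (fun s hs => (hderiv s (interior_subset hs).1).differentiableAt.differentiableWithinAt)
    hmono 0 (Set.left_mem_Icc.mpr hε) ε (Set.right_mem_Icc.mpr hε) hε
  simp only [zero_smul, hβ0, sub_zero] at this
  linarith

theorem eventually_lt_mul_sq_of_fderiv_eq (ι : V →L[ℝ] W) (hβ : Differentiable ℝ β)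
    (hβ0 : β 0 = 0) (hβ' : ∀ v h, fderiv ℝ β v h = g ‖ι v‖ * ⟪ι v, ι h⟫_ℝ) (hg0 : g 0 = 0)
    (hg : MonotoneOn g (Set.Ici 0)) (hgc : ContinuousWithinAt g (Set.Ici 0) 0) (x : V) {δ : ℝ}
    (hδ : 0 < δ) : ∀ᶠ ε in 𝓝[>] 0, β (ε • x) < δ * ε ^ 2 := by
  have hlim : Tendsto (fun ε => g (ε * ‖ι x‖) * ‖ι x‖ ^ 2) (𝓝[>] 0) (𝓝 0) := by
    have hc : ContinuousWithinAt (fun ε => g (ε * ‖ι x‖)) (Set.Ici 0) 0 :=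
      hgc.comp_of_eq (continuous_mul_const ‖ι x‖).continuousWithinAt
        (fun ε hε => mul_nonneg hε (norm_nonneg _)) (zero_mul _)
    simpa only [zero_mul, hg0] using
      ((hc.tendsto.mono_left (nhdsWithin_mono _ Set.Ioi_subset_Ici_self)).mul_const (‖ι x‖ ^ 2))
  filter_upwards [hlim (Iio_mem_nhds hδ), self_mem_nhdsWithin] with ε hε hεpos
  calc β (ε • x) ≤ g (ε * ‖ι x‖) * ‖ι x‖ ^ 2 * ε ^ 2 :=
        le_mul_sq_of_fderiv_eq ι hβ hβ0 hβ' hg0 hg x (le_of_lt hεpos)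
    _ < δ * ε ^ 2 := mul_lt_mul_of_pos_right hε (pow_pos hεpos 2)

end SmallScale

theorem stmt_6_general
    {W : Type*} [NormedAddCommGroup W] [InnerProductSpace ℝ W]
    {V : Type*} [NormedAddCommGroup V] [InnerProductSpace ℝ V] [CompleteSpace V]
    (ι : V →L[ℝ] W)
    (Pp Pm : V →L[ℝ] V)
    (hP_sum : ∀ v : V, Pp v + Pm v = v)
    (hPp_idem : ∀ v : V, Pp (Pp v) = Pp v)
    (a : V →L[ℝ] V →L[ℝ] ℝ)
    (ha : ∀ v w : V, a v w = ⟪Pp v, Pp w⟫_ℝ - ⟪Pm v, Pm w⟫_ℝ)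
    {N : Type*} [NormedAddCommGroup N] [InnerProductSpace ℝ N]
    (b : N → V → ℝ) (f : N → ℝ → ℝ)
    (hb_C2 : ContDiff ℝ 2 (fun q : N × V => b q.1 q.2))
    (hb_zero : ∀ u : N, b u 0 = 0)
    (hb_nonneg : ∀ (u : N) (v : V), 0 ≤ b u v)
    (hf_cont : ContinuousOn (fun q : N × ℝ => f q.1 q.2) (Set.univ ×ˢ Set.Ici (0:ℝ)))
    (hf_zero : ∀ u : N, f u 0 = 0)
    (hf_mono : ∀ u : N, StrictMonoOn (f u) (Set.Ici (0:ℝ)))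
    (hgrad : ∀ (u : N) (v h : V), fderiv ℝ (b u) v h = f u ‖ι v‖ * ⟪ι v, ι h⟫_ℝ)
    (hb_wcont : ∀ (u : N) (vseq : ℕ → V) (v : V),
      (∀ y : V, Tendsto (fun n => ⟪vseq n, y⟫_ℝ) atTop (𝓝 ⟪v, y⟫_ℝ)) →
      Tendsto (fun n => b u (vseq n)) atTop (𝓝 (b u v)))
    (hb_super : ∀ (u : N) (vseq : ℕ → V) (v : V), v ≠ 0 →
      (∀ y : V, Tendsto (fun n => ⟪vseq n, y⟫_ℝ) atTop (𝓝 ⟪v, y⟫_ℝ)) →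
      ∀ s : ℕ → ℝ, Tendsto s atTop atTop →
      Tendsto (fun n => b u (s n • vseq n) / (s n) ^ 2) atTop atTop)
    :
    ∀ (u : N) (v : V), Pp v ≠ 0 →
      ∃ w₀ : V,
        (∃ (t : ℝ) (w : V), 0 ≤ t ∧ Pm w = w ∧ w₀ = t • v + w) ∧
        Pp w₀ ≠ 0 ∧
        0 < (1/2 : ℝ) * a w₀ w₀ - b u w₀ ∧
        ∀ (t : ℝ) (w : V), 0 ≤ t → Pm w = w →
          (1/2 : ℝ) * a (t • v + w) (t • v + w) - b u (t • v + w) ≤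
            (1/2 : ℝ) * a w₀ w₀ - b u w₀ := by
  intro u v hv
  have hbu : Differentiable ℝ (b u) :=
    (hb_C2.comp (contDiff_const.prodMk contDiff_id)).differentiable two_ne_zero
  have hfu : ContinuousWithinAt (f u) (Set.Ici 0) 0 :=
    (hf_cont (u, 0) ⟨trivial, Set.self_mem_Ici⟩).comp
      (continuous_const.prodMk continuous_id).continuousWithinAt fun _ ht => ⟨trivial, ht⟩
  obtain ⟨w₁, hw₁, hE₁⟩ := exists_energy_pos hP_sum hPp_idem ha hv fun δ hδ =>
    eventually_lt_mul_sq_of_fderiv_eq ι hbu (hb_zero u) (hgrad u) (hf_zero u)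
      (hf_mono u).monotoneOn hfu (Pp v) hδ
  obtain ⟨w₀, hw₀, hmax⟩ := exists_isMaxOn_energy hP_sum ha (hb_nonneg u) (hb_wcont u)
    (hb_super u) hv hw₁ hE₁.le
  have hE₀ : 0 < energy a (b u) w₀ := hE₁.trans_le (hmax hw₁)
  refine ⟨w₀, hw₀, fun h => ?_, hE₀, fun t w ht hw => hmax ⟨t, w, ht, hw, rfl⟩⟩
  have := energy_le ha (hb_nonneg u) w₀
  rw [h, norm_zero] at this
  linarith

theorem stmt_6
    {W : Type*} [NormedAddCommGroup W] [InnerProductSpace ℝ W] [CompleteSpace W]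
    {V : Type*} [NormedAddCommGroup V] [InnerProductSpace ℝ V] [CompleteSpace V]
    (ι : V →L[ℝ] W) (hι : Function.Injective ι)
    (c : ℝ) (hc : 0 < c) (hιc : ∀ v : V, ‖ι v‖ ≤ c * ‖v‖)
    (Pp Pm : V →L[ℝ] V)
    (hP_sum : ∀ v : V, Pp v + Pm v = v)
    (hPp_idem : ∀ v : V, Pp (Pp v) = Pp v)
    (hPm_idem : ∀ v : V, Pm (Pm v) = Pm v)
    (hP_orth : ∀ v w : V, ⟪Pp v, Pm w⟫_ℝ = 0)
    (a : V →L[ℝ] V →L[ℝ] ℝ)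
    (ha : ∀ v w : V, a v w = ⟪Pp v, Pp w⟫_ℝ - ⟪Pm v, Pm w⟫_ℝ)
    {N : Type*} [NormedAddCommGroup N] [InnerProductSpace ℝ N] [CompleteSpace N]
    (p : ℝ) (hp : 1 < p)
    (b : N → V → ℝ) (f : N → ℝ → ℝ)
    (hb_C2 : ContDiff ℝ 2 (fun q : N × V => b q.1 q.2))
    (hb_zero : ∀ u : N, b u 0 = 0)
    (hb_nonneg : ∀ (u : N) (v : V), 0 ≤ b u v)
    (hf_cont : ContinuousOn (fun q : N × ℝ => f q.1 q.2) (Set.univ ×ˢ Set.Ici (0:ℝ)))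
    (hf_zero : ∀ u : N, f u 0 = 0)
    (hf_mono : ∀ u : N, StrictMonoOn (f u) (Set.Ici (0:ℝ)))
    (hf_nonneg : ∀ (u : N) (t : ℝ), 0 ≤ t → 0 ≤ f u t)
    (hgrad : ∀ (u : N) (v h : V), fderiv ℝ (b u) v h = f u ‖ι v‖ * ⟪ι v, ι h⟫_ℝ)
    (hb_wcont : ∀ (u : N) (vseq : ℕ → V) (v : V),
      (∀ y : V, Tendsto (fun n => ⟪vseq n, y⟫_ℝ) atTop (𝓝 ⟪v, y⟫_ℝ)) →
      Tendsto (fun n => b u (vseq n)) atTop (𝓝 (b u v)))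
    (hb_super : ∀ (u : N) (vseq : ℕ → V) (v : V), v ≠ 0 →
      (∀ y : V, Tendsto (fun n => ⟪vseq n, y⟫_ℝ) atTop (𝓝 ⟪v, y⟫_ℝ)) →
      ∀ s : ℕ → ℝ, Tendsto s atTop atTop →
      Tendsto (fun n => b u (s n • vseq n) / (s n) ^ 2) atTop atTop)
    :
    ∀ (u : N) (v : V), Pp v ≠ 0 →
      ∃ w₀ : V,
        (∃ (t : ℝ) (w : V), 0 ≤ t ∧ Pm w = w ∧ w₀ = t • v + w) ∧
        Pp w₀ ≠ 0 ∧
        0 < (1/2 : ℝ) * a w₀ w₀ - b u w₀ ∧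
        ∀ (t : ℝ) (w : V), 0 ≤ t → Pm w = w →
          (1/2 : ℝ) * a (t • v + w) (t • v + w) - b u (t • v + w) ≤
            (1/2 : ℝ) * a w₀ w₀ - b u w₀ :=
  stmt_6_general ι Pp Pm hP_sum hPp_idem a ha b f hb_C2 hb_zero hb_nonneg hf_cont hf_zero hf_mono
    hgrad hb_wcont hb_super
end

section
/- Let (u,v) ∈ 𝒩. Then for every t ≥ 0 and every w ∈ V⁻ with (t,w) ≠ (1,0), one has E₂(u, tv + w) < E₂(u, v); that is, v is the unique maximizer of E₂(u,·) on F_u(v). -/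
open scoped InnerProductSpace
open Set intervalIntegral

/-! With `r = ‖ι v‖` and `s = ‖ι (t • v + w)‖`, the gradient hypothesis makes `b u` radial:
`b u z = ∫ σ in 0..‖ι z‖, f u σ * σ`. The two Nehari identities and Cauchy–Schwarz give
`a z z ≤ f u r * s ^ 2 - f u r * (s - t * r) ^ 2 - ‖w‖ ^ 2` for `z = t • v + w`, while strict
monotonicity of `f u` makes `∫ σ in r..s, f u σ * σ` exceed `f u r * (s ^ 2 - r ^ 2) / 2`
whenever `s ≠ r`. Hence the energy does not increase, and equality would force `s = r`, then
`t = 1` and `w = 0`. -/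

section RadialPotential

variable {V W : Type*} [NormedAddCommGroup V] [InnerProductSpace ℝ V]
  [NormedAddCommGroup W] [InnerProductSpace ℝ W]

theorem apply_eq_add_integral_of_fderiv_eq (ι : V →L[ℝ] W) {g : V → ℝ}
    (hg : Differentiable ℝ g) {φ : ℝ → ℝ} (hφ : ContinuousOn φ (Ici 0))
    (hderiv : ∀ v h : V, fderiv ℝ g v h = φ ‖ι v‖ * ⟪ι v, ι h⟫_ℝ) (z : V) :
    g z = g 0 + ∫ σ in (0 : ℝ)..‖ι z‖, φ σ * σ := by
  set ρ := ‖ι z‖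
  have hunit : ∀ τ ∈ uIcc (0 : ℝ) 1, 0 ≤ τ := fun τ hτ => by
    rw [uIcc_of_le zero_le_one] at hτ; exact hτ.1
  have hline : ∀ τ ∈ uIcc (0 : ℝ) 1,
      HasDerivAt (fun τ : ℝ => g (τ • z)) ((φ (τ * ρ) * (τ * ρ)) * ρ) τ := by
    intro τ hτ
    have := (hg (τ • z)).hasFDerivAt.comp_hasDerivAt τ ((hasDerivAt_id τ).smul_const z)
    refine this.congr_deriv ?_
    simp only [one_smul, hderiv, map_smul, norm_smul, Real.norm_eq_abs,
      abs_of_nonneg (hunit τ hτ), real_inner_smul_left, real_inner_self_eq_norm_sq, ρ]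
    ring
  have hcont : ContinuousOn (fun σ => φ σ * σ) ((fun τ => τ * ρ) '' uIcc 0 1) := by
    refine (hφ.mul continuousOn_id).mono ?_
    rintro _ ⟨τ, hτ, rfl⟩
    exact mul_nonneg (hunit τ hτ) (norm_nonneg _)
  have hsubst : ∫ τ in (0 : ℝ)..1, (φ (τ * ρ) * (τ * ρ)) * ρ = ∫ σ in (0 : ℝ)..ρ, φ σ * σ := by
    simpa using integral_comp_mul_deriv'
      (fun τ _ => (hasDerivAt_id τ).mul_const ρ) continuousOn_const hcont
  have hFTC := integral_eq_sub_of_hasDerivAt hline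
    ((hcont.comp (continuous_mul_const ρ).continuousOn (mapsTo_image _ _)).mul
      continuousOn_const).intervalIntegrable
  simp only [one_smul, zero_smul] at hFTC
  linarith

end RadialPotential

theorem StrictMonoOn.mul_sq_sub_sq_div_two_lt_integral {φ : ℝ → ℝ}
    (hmono : StrictMonoOn φ (Ici 0)) (hφ : ContinuousOn φ (Ici 0)) {r s : ℝ} (hr : 0 ≤ r)
    (hs : 0 ≤ s) (hne : s ≠ r) :
    φ r * (s ^ 2 - r ^ 2) / 2 < (∫ σ in (0 : ℝ)..s, φ σ * σ) - ∫ σ in (0 : ℝ)..r, φ σ * σ := by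
  have hcont : ∀ {x y : ℝ}, 0 ≤ x → 0 ≤ y → ContinuousOn φ (uIcc x y) := fun hx hy =>
    hφ.mono fun σ hσ => (le_min hx hy).trans hσ.1
  rw [integral_interval_sub_left (f := fun σ => φ σ * σ)
    ((hcont le_rfl hs).mul continuousOn_id).intervalIntegrable
    ((hcont le_rfl hr).mul continuousOn_id).intervalIntegrable]
  have hgap : 0 < ∫ σ in r..s, (φ σ - φ r) * σ := by
    rcases hne.lt_or_gt with hsr | hrs
    · rw [integral_symm, ← integral_neg]
      refine intervalIntegral_pos_of_pos_on
        (((hcont hs hr).sub continuousOn_const).mul continuousOn_id).neg.intervalIntegrable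
        (fun σ hσ => ?_) hsr
      have hσ0 : 0 < σ := hs.trans_lt hσ.1
      have := hmono hσ0.le hr hσ.2
      nlinarith
    · refine intervalIntegral_pos_of_pos_on
        (((hcont hr hs).sub continuousOn_const).mul continuousOn_id).intervalIntegrable
        (fun σ hσ => ?_) hrs
      have hσ0 : 0 < σ := hr.trans_lt hσ.1
      have := hmono hr hσ0.le hσ.1
      nlinarith
  have hsplit : ∫ σ in r..s, (φ σ - φ r) * σ
      = (∫ σ in r..s, φ σ * σ) - φ r * (s ^ 2 - r ^ 2) / 2 := by
    simp only [sub_mul]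
    rw [integral_sub (f := fun σ => φ σ * σ) (g := fun σ => φ r * σ)
      ((hcont hr hs).mul continuousOn_id).intervalIntegrable
      (continuousOn_const.mul continuousOn_id).intervalIntegrable, integral_const_mul, integral_id]
    ring
  linarith

section NehariQuadraticForm

variable {V W : Type*} [NormedAddCommGroup V] [InnerProductSpace ℝ V]
  [NormedAddCommGroup W] [InnerProductSpace ℝ W]
  {Pp Pm : V →L[ℝ] V} {a : V →L[ℝ] V →L[ℝ] ℝ}

theorem apply_self_eq_neg_sq_of_projection_eq_self (hP_sum : ∀ v : V, Pp v + Pm v = v)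
    (ha : ∀ v w : V, a v w = ⟪Pp v, Pp w⟫_ℝ - ⟪Pm v, Pm w⟫_ℝ) {w : V} (hw : Pm w = w) :
    a w w = -‖w‖ ^ 2 := by
  have hPp : Pp w = 0 := by simpa [hw] using hP_sum w
  simp [ha, hPp, hw]

theorem apply_smul_add_self_le_of_nehari (ι : V →L[ℝ] W) (hP_sum : ∀ v : V, Pp v + Pm v = v)
    (ha : ∀ v w : V, a v w = ⟪Pp v, Pp w⟫_ℝ - ⟪Pm v, Pm w⟫_ℝ) {κ t : ℝ} {v w : V}
    (hκ : 0 ≤ κ) (ht : 0 ≤ t) (hw : Pm w = w)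
    (hvv : a v v = κ * ⟪ι v, ι v⟫_ℝ) (hvw : a v w = κ * ⟪ι v, ι w⟫_ℝ) :
    a (t • v + w) (t • v + w) ≤
      κ * ‖ι (t • v + w)‖ ^ 2 - κ * (‖ι (t • v + w)‖ - t * ‖ι v‖) ^ 2 - ‖w‖ ^ 2 := by
  have hsymm : a w v = a v w := by rw [ha, ha, real_inner_comm (Pp w), real_inner_comm (Pm w)]
  have hexpand : a (t • v + w) (t • v + w) = t ^ 2 * a v v + 2 * t * a v w + a w w := by
    simp only [map_add, map_smul, add_apply, FunLike.coe_smul, Pi.smul_apply, smul_eq_mul,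
      hsymm]
    ring
  have hinner : ⟪ι v, ι (t • v + w)⟫_ℝ = t * ‖ι v‖ ^ 2 + ⟪ι v, ι w⟫_ℝ := by
    rw [map_add, map_smul, inner_add_right, inner_smul_right, real_inner_self_eq_norm_sq]
  have hCS := mul_le_mul_of_nonneg_left (real_inner_le_norm (ι v) (ι (t • v + w)))
    (mul_nonneg hκ ht)
  rw [hexpand, hvv, hvw, apply_self_eq_neg_sq_of_projection_eq_self hP_sum ha hw,
    real_inner_self_eq_norm_sq]
  rw [hinner] at hCS
  linarith

end NehariQuadraticForm

theorem mul_sub_mul_sq_add_norm_sq_pos {E : Type*} [NormedAddCommGroup E] {κ r t : ℝ} {w : E}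
    (hκ : 0 < κ) (hr : 0 < r) (hne : ¬(t = 1 ∧ w = 0)) : 0 < κ * (r - t * r) ^ 2 + ‖w‖ ^ 2 := by
  rcases not_and_or.1 hne with ht | hw
  · have : r - t * r ≠ 0 := by
      rw [← one_sub_mul]
      exact mul_ne_zero (sub_ne_zero.2 (Ne.symm ht)) hr.ne'
    positivity
  · have := norm_pos_iff.2 hw
    positivity

theorem stmt_7_general
    {W : Type*} [NormedAddCommGroup W] [InnerProductSpace ℝ W]
    {V : Type*} [NormedAddCommGroup V] [InnerProductSpace ℝ V]
    (ι : V →L[ℝ] W) (hι : Function.Injective ι)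
    (Pp Pm : V →L[ℝ] V)
    (hP_sum : ∀ v : V, Pp v + Pm v = v)
    (a : V →L[ℝ] V →L[ℝ] ℝ)
    (ha : ∀ v w : V, a v w = ⟪Pp v, Pp w⟫_ℝ - ⟪Pm v, Pm w⟫_ℝ)
    {N : Type*} [NormedAddCommGroup N] [InnerProductSpace ℝ N]
    (b : N → V → ℝ) (f : N → ℝ → ℝ)
    (hb_C2 : ContDiff ℝ 2 (fun q : N × V => b q.1 q.2))
    (hb_zero : ∀ u : N, b u 0 = 0)
    (hf_cont : ContinuousOn (fun q : N × ℝ => f q.1 q.2) (Set.univ ×ˢ Set.Ici (0:ℝ)))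
    (hf_zero : ∀ u : N, f u 0 = 0)
    (hf_mono : ∀ u : N, StrictMonoOn (f u) (Set.Ici (0:ℝ)))
    (hgrad : ∀ (u : N) (v h : V), fderiv ℝ (b u) v h = f u ‖ι v‖ * ⟪ι v, ι h⟫_ℝ)
    (u : N) (v : V)
    (hv_plus : Pp v ≠ 0)
    (hN1 : a v v = f u ‖ι v‖ * ⟪ι v, ι v⟫_ℝ)
    (hN2 : ∀ φ : V, Pm φ = φ → a v φ = f u ‖ι v‖ * ⟪ι v, ι φ⟫_ℝ) :
    ∀ (t : ℝ) (w : V), 0 ≤ t → Pm w = w → ¬(t = 1 ∧ w = 0) →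
      (1/2 : ℝ) * a (t • v + w) (t • v + w) - b u (t • v + w) <
        (1/2 : ℝ) * a v v - b u v := by
  intro t w ht hw hne
  have hr : 0 < ‖ι v‖ := norm_pos_iff.2 fun h => hv_plus (by simp [hι (h.trans ι.map_zero.symm)])
  have hfr : 0 < f u ‖ι v‖ := hf_zero u ▸ hf_mono u self_mem_Ici hr.le hr
  have hfu : ContinuousOn (f u) (Ici 0) :=
    hf_cont.comp (Continuous.prodMk_right u).continuousOn fun _ hσ => ⟨trivial, hσ⟩
  have hbu : Differentiable ℝ (b u) :=
    (hb_C2.comp (contDiff_const.prodMk contDiff_id)).differentiable (by norm_num)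
  have hquad := apply_smul_add_self_le_of_nehari ι hP_sum ha hfr.le ht hw hN1 (hN2 w hw)
  rw [apply_eq_add_integral_of_fderiv_eq ι hbu hfu (hgrad u),
    apply_eq_add_integral_of_fderiv_eq ι hbu hfu (hgrad u) v, hb_zero, hN1,
    real_inner_self_eq_norm_sq]
  set r := ‖ι v‖
  set s := ‖ι (t • v + w)‖
  rcases eq_or_ne s r with hsr | hsr
  · rw [hsr] at hquad ⊢
    linarith [mul_sub_mul_sq_add_norm_sq_pos hfr hr hne]
  · have hgain := (hf_mono u).mul_sq_sub_sq_div_two_lt_integral hfu hr.le (s := s)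
      (norm_nonneg _) hsr
    linarith [mul_nonneg hfr.le (sq_nonneg (s - t * r)), sq_nonneg ‖w‖]

theorem stmt_7
    {W : Type*} [NormedAddCommGroup W] [InnerProductSpace ℝ W] [CompleteSpace W]
    {V : Type*} [NormedAddCommGroup V] [InnerProductSpace ℝ V] [CompleteSpace V]
    (ι : V →L[ℝ] W) (hι : Function.Injective ι)
    (c : ℝ) (hc : 0 < c) (hιc : ∀ v : V, ‖ι v‖ ≤ c * ‖v‖)
    (Pp Pm : V →L[ℝ] V)
    (hP_sum : ∀ v : V, Pp v + Pm v = v)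
    (hPp_idem : ∀ v : V, Pp (Pp v) = Pp v)
    (hPm_idem : ∀ v : V, Pm (Pm v) = Pm v)
    (hP_orth : ∀ v w : V, ⟪Pp v, Pm w⟫_ℝ = 0)
    (a : V →L[ℝ] V →L[ℝ] ℝ)
    (ha : ∀ v w : V, a v w = ⟪Pp v, Pp w⟫_ℝ - ⟪Pm v, Pm w⟫_ℝ)
    {N : Type*} [NormedAddCommGroup N] [InnerProductSpace ℝ N] [CompleteSpace N]
    (p : ℝ) (hp : 1 < p)
    (b : N → V → ℝ) (f : N → ℝ → ℝ)
    (hb_C2 : ContDiff ℝ 2 (fun q : N × V => b q.1 q.2))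
    (hb_zero : ∀ u : N, b u 0 = 0)
    (hb_nonneg : ∀ (u : N) (v : V), 0 ≤ b u v)
    (hf_cont : ContinuousOn (fun q : N × ℝ => f q.1 q.2) (Set.univ ×ˢ Set.Ici (0:ℝ)))
    (hf_zero : ∀ u : N, f u 0 = 0)
    (hf_mono : ∀ u : N, StrictMonoOn (f u) (Set.Ici (0:ℝ)))
    (hf_nonneg : ∀ (u : N) (t : ℝ), 0 ≤ t → 0 ≤ f u t)
    (hgrad : ∀ (u : N) (v h : V), fderiv ℝ (b u) v h = f u ‖ι v‖ * ⟪ι v, ι h⟫_ℝ)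
    (u : N) (v : V)
    (hv_plus : Pp v ≠ 0)
    (hN1 : a v v = f u ‖ι v‖ * ⟪ι v, ι v⟫_ℝ)
    (hN2 : ∀ φ : V, Pm φ = φ → a v φ = f u ‖ι v‖ * ⟪ι v, ι φ⟫_ℝ) :
    ∀ (t : ℝ) (w : V), 0 ≤ t → Pm w = w → ¬(t = 1 ∧ w = 0) →
      (1/2 : ℝ) * a (t • v + w) (t • v + w) - b u (t • v + w) <
        (1/2 : ℝ) * a v v - b u v :=
  stmt_7_general ι hι Pp Pm hP_sum a ha b f hb_C2 hb_zero hf_cont hf_zero hf_mono hgrad u v hv_plus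
    hN1 hN2
end

section
/- For every (u,v) ∈ 𝒩 one has ‖P⁻v‖_V² = −⟨∇_v b(u,v), P⁻v⟩, and consequently ‖P⁻v‖_V ≤ c f(u,|v|)|v|. -/
open scoped InnerProductSpace
open Filter Topology

theorem stmt_12
    {W : Type*} [NormedAddCommGroup W] [InnerProductSpace ℝ W] [CompleteSpace W]
    {V : Type*} [NormedAddCommGroup V] [InnerProductSpace ℝ V] [CompleteSpace V]
    (ι : V →L[ℝ] W) (hι : Function.Injective ι)
    (c : ℝ) (hc : 0 < c) (hιc : ∀ v : V, ‖ι v‖ ≤ c * ‖v‖)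
    (Pp Pm : V →L[ℝ] V)
    (hP_sum : ∀ v : V, Pp v + Pm v = v)
    (hPp_idem : ∀ v : V, Pp (Pp v) = Pp v)
    (hPm_idem : ∀ v : V, Pm (Pm v) = Pm v)
    (hP_orth : ∀ v w : V, ⟪Pp v, Pm w⟫_ℝ = 0)
    (a : V →L[ℝ] V →L[ℝ] ℝ)
    (ha : ∀ v w : V, a v w = ⟪Pp v, Pp w⟫_ℝ - ⟪Pm v, Pm w⟫_ℝ)
    {N : Type*} [NormedAddCommGroup N] [InnerProductSpace ℝ N] [CompleteSpace N]
    (p : ℝ) (hp : 1 < p)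
    (b : N → V → ℝ) (f : N → ℝ → ℝ)
    (hb_C2 : ContDiff ℝ 2 (fun q : N × V => b q.1 q.2))
    (hb_zero : ∀ u : N, b u 0 = 0)
    (hb_nonneg : ∀ (u : N) (v : V), 0 ≤ b u v)
    (hf_cont : ContinuousOn (fun q : N × ℝ => f q.1 q.2) (Set.univ ×ˢ Set.Ici (0:ℝ)))
    (hf_zero : ∀ u : N, f u 0 = 0)
    (hf_mono : ∀ u : N, StrictMonoOn (f u) (Set.Ici (0:ℝ)))
    (hf_nonneg : ∀ (u : N) (t : ℝ), 0 ≤ t → 0 ≤ f u t)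
    (hgrad : ∀ (u : N) (v h : V), fderiv ℝ (b u) v h = f u ‖ι v‖ * ⟪ι v, ι h⟫_ℝ)
    :
    ∀ (u : N) (v : V), Pp v ≠ 0 →
      a v v = f u ‖ι v‖ * ⟪ι v, ι v⟫_ℝ →
      (∀ φ : V, Pm φ = φ → a v φ = f u ‖ι v‖ * ⟪ι v, ι φ⟫_ℝ) →
      ‖Pm v‖ ^ 2 = -(f u ‖ι v‖ * ⟪ι v, ι (Pm v)⟫_ℝ) ∧
      ‖Pm v‖ ≤ c * (f u ‖ι v‖ * ‖ι v‖) := by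
  intro u v _ _ hNeh
  have hPpPm : Pp (Pm v) = 0 := by
    have h1 := hP_sum (Pm v)
    have h2 := hPm_idem v
    rw [h2] at h1
    linear_combination (norm := module) h1
  have hkey : a v (Pm v) = -‖Pm v‖ ^ 2 := by
    rw [ha, hPpPm, inner_zero_right, hPm_idem, real_inner_self_eq_norm_sq]
    ring
  have heq : ‖Pm v‖ ^ 2 = -(f u ‖ι v‖ * ⟪ι v, ι (Pm v)⟫_ℝ) := by
    have := hNeh (Pm v) (hPm_idem v)
    rw [hkey] at this
    linarith
  refine ⟨heq, ?_⟩
  have hfnn : 0 ≤ f u ‖ι v‖ := hf_nonneg u _ (norm_nonneg _)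
  by_cases h0 : Pm v = 0
  · rw [h0, norm_zero]
    positivity
  · have hpos : 0 < ‖Pm v‖ := norm_pos_iff.mpr h0
    have h1 : ‖Pm v‖ ^ 2 ≤ f u ‖ι v‖ * (‖ι v‖ * ‖ι (Pm v)‖) := by
      rw [heq]
      have := abs_real_inner_le_norm (ι v) (ι (Pm v))
      nlinarith [neg_abs_le (⟪ι v, ι (Pm v)⟫_ℝ)]
    have h2 : ‖ι (Pm v)‖ ≤ c * ‖Pm v‖ := hιc (Pm v)
    have h3 : ‖Pm v‖ ^ 2 ≤ f u ‖ι v‖ * ‖ι v‖ * (c * ‖Pm v‖) := by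
      nlinarith [mul_le_mul_of_nonneg_left h2 (mul_nonneg hfnn (norm_nonneg (ι v)))]
    nlinarith
end

section
/- For every (u,v) ∈ 𝒩 one has ‖v‖_V² ≤ f(u,|v|)(1 + 2c² f(u,|v|))|v|². -/
open scoped InnerProductSpace
open Filter Topology

theorem stmt_13
    {W : Type*} [NormedAddCommGroup W] [InnerProductSpace ℝ W] [CompleteSpace W]
    {V : Type*} [NormedAddCommGroup V] [InnerProductSpace ℝ V] [CompleteSpace V]
    (ι : V →L[ℝ] W) (hι : Function.Injective ι)
    (c : ℝ) (hc : 0 < c) (hιc : ∀ v : V, ‖ι v‖ ≤ c * ‖v‖)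
    (Pp Pm : V →L[ℝ] V)
    (hP_sum : ∀ v : V, Pp v + Pm v = v)
    (hPp_idem : ∀ v : V, Pp (Pp v) = Pp v)
    (hPm_idem : ∀ v : V, Pm (Pm v) = Pm v)
    (hP_orth : ∀ v w : V, ⟪Pp v, Pm w⟫_ℝ = 0)
    (a : V →L[ℝ] V →L[ℝ] ℝ)
    (ha : ∀ v w : V, a v w = ⟪Pp v, Pp w⟫_ℝ - ⟪Pm v, Pm w⟫_ℝ)
    {N : Type*} [NormedAddCommGroup N] [InnerProductSpace ℝ N] [CompleteSpace N]
    (p : ℝ) (hp : 1 < p)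
    (b : N → V → ℝ) (f : N → ℝ → ℝ)
    (hb_C2 : ContDiff ℝ 2 (fun q : N × V => b q.1 q.2))
    (hb_zero : ∀ u : N, b u 0 = 0)
    (hb_nonneg : ∀ (u : N) (v : V), 0 ≤ b u v)
    (hf_cont : ContinuousOn (fun q : N × ℝ => f q.1 q.2) (Set.univ ×ˢ Set.Ici (0:ℝ)))
    (hf_zero : ∀ u : N, f u 0 = 0)
    (hf_mono : ∀ u : N, StrictMonoOn (f u) (Set.Ici (0:ℝ)))
    (hf_nonneg : ∀ (u : N) (t : ℝ), 0 ≤ t → 0 ≤ f u t)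
    (hgrad : ∀ (u : N) (v h : V), fderiv ℝ (b u) v h = f u ‖ι v‖ * ⟪ι v, ι h⟫_ℝ)
    :
    ∀ (u : N) (v : V), Pp v ≠ 0 →
      a v v = f u ‖ι v‖ * ⟪ι v, ι v⟫_ℝ →
      (∀ φ : V, Pm φ = φ → a v φ = f u ‖ι v‖ * ⟪ι v, ι φ⟫_ℝ) →
      ‖v‖ ^ 2 ≤ f u ‖ι v‖ * (1 + 2 * c ^ 2 * f u ‖ι v‖) * ‖ι v‖ ^ 2 := by

  intro u v hPp hN1 hN2
  have hF0 : 0 ≤ f u ‖ι v‖ := hf_nonneg u _ (norm_nonneg _)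
  set F := f u ‖ι v‖ with hF
  have hPpPm : Pp (Pm v) = 0 := by
    have h := hP_sum (Pm v)
    rw [hPm_idem] at h
    exact add_right_cancel (h.trans (zero_add (Pm v)).symm)
  have hnorm : ‖v‖ ^ 2 = ‖Pp v‖ ^ 2 + ‖Pm v‖ ^ 2 := by
    have h : ⟪v, v⟫_ℝ = ⟪Pp v + Pm v, Pp v + Pm v⟫_ℝ := by rw [hP_sum]
    rw [real_inner_add_add_self, hP_orth, real_inner_self_eq_norm_sq,
      real_inner_self_eq_norm_sq, real_inner_self_eq_norm_sq] at h
    linarith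
  have h1 : ‖Pp v‖ ^ 2 - ‖Pm v‖ ^ 2 = F * ‖ι v‖ ^ 2 := by
    have := hN1
    rw [ha, real_inner_self_eq_norm_sq, real_inner_self_eq_norm_sq,
      real_inner_self_eq_norm_sq] at this
    linarith [this]
  have h2 : -(‖Pm v‖ ^ 2) = F * ⟪ι v, ι (Pm v)⟫_ℝ := by
    have := hN2 (Pm v) (hPm_idem v)
    rw [ha, hPpPm, inner_zero_right, hPm_idem, real_inner_self_eq_norm_sq] at this
    linarith [this]
  have hip : |⟪ι v, ι (Pm v)⟫_ℝ| ≤ ‖ι v‖ * (c * ‖Pm v‖) := by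
    calc |⟪ι v, ι (Pm v)⟫_ℝ| ≤ ‖ι v‖ * ‖ι (Pm v)‖ := abs_real_inner_le_norm _ _
    _ ≤ ‖ι v‖ * (c * ‖Pm v‖) := by
        exact mul_le_mul_of_nonneg_left (hιc (Pm v)) (norm_nonneg _)
  have hm : ‖Pm v‖ ^ 2 ≤ F * (‖ι v‖ * (c * ‖Pm v‖)) := by
    have := neg_abs_le ⟪ι v, ι (Pm v)⟫_ℝ
    nlinarith [abs_nonneg ⟪ι v, ι (Pm v)⟫_ℝ]
  have hm2 : ‖Pm v‖ ^ 2 ≤ (F * ‖ι v‖ * c) ^ 2 := by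
    nlinarith [sq_nonneg (‖Pm v‖ - F * ‖ι v‖ * c), norm_nonneg (Pm v),
      mul_nonneg (mul_nonneg hF0 (norm_nonneg (ι v))) hc.le]
  rw [real_inner_self_eq_norm_sq] at hN1
  nlinarith [hm2, h1, hnorm]
end

section
/- For every bounded set B ⊆ N there exists δ > 0 such that every (u,v) ∈ 𝒩 with u ∈ B satisfies ‖v‖_V ≥ δ. -/
/-!
Testing the Nehari equations against the reflection `v - 2 P⁻v = P⁺v - P⁻v`, which has the same
norm as `v`, gives `‖v‖² = f(u,|v|) ⟨v, v - 2 P⁻v⟩ ≤ c² |f(u,|v|)| ‖v‖²`, so `|f(u,|v|)| ≥ c⁻²`.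
Since `∇_v b(u,0) = 0`, the mean value theorem along the ray `t ↦ t v` and the Hessian bound give
`|f(u,|v|)| ≤ C₂(‖u‖) |v|^(p-1) ≤ C₂(‖u‖) (c ‖v‖)^(p-1)`, and `C₂(‖u‖)` is bounded for `u ∈ B`.
Hence `‖v‖^(p-1)` is bounded below on the Nehari set over `B`.
-/

open scoped InnerProductSpace

section Projections

variable {V : Type*} [NormedAddCommGroup V] [InnerProductSpace ℝ V] {Pp Pm : V →L[ℝ] V}

theorem norm_sq_eq_add_of_orthogonal_projections (hP_sum : ∀ v : V, Pp v + Pm v = v)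
    (hP_orth : ∀ v w : V, ⟪Pp v, Pm w⟫_ℝ = 0) (v : V) :
    ‖v‖ ^ 2 = ‖Pp v‖ ^ 2 + ‖Pm v‖ ^ 2 := by
  nth_rewrite 1 [← hP_sum v]
  rw [norm_add_sq_real, hP_orth]
  ring

theorem norm_sub_two_smul_proj_eq (hP_sum : ∀ v : V, Pp v + Pm v = v)
    (hP_orth : ∀ v w : V, ⟪Pp v, Pm w⟫_ℝ = 0) (v : V) :
    ‖v - (2 : ℝ) • Pm v‖ = ‖v‖ := by
  have hreflect : v - (2 : ℝ) • Pm v = Pp v - Pm v := by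
    nth_rewrite 1 [← hP_sum v]
    rw [two_smul]
    abel
  refine (sq_eq_sq₀ (norm_nonneg _) (norm_nonneg _)).mp ?_
  rw [hreflect, norm_sub_sq_real, hP_orth,
    norm_sq_eq_add_of_orthogonal_projections hP_sum hP_orth v]
  ring

theorem norm_sq_eq_form_sub_two_form (hP_sum : ∀ v : V, Pp v + Pm v = v)
    (hPm_idem : ∀ v : V, Pm (Pm v) = Pm v) (hP_orth : ∀ v w : V, ⟪Pp v, Pm w⟫_ℝ = 0)
    {a : V →L[ℝ] V →L[ℝ] ℝ} (ha : ∀ v w : V, a v w = ⟪Pp v, Pp w⟫_ℝ - ⟪Pm v, Pm w⟫_ℝ)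
    (v : V) :
    ‖v‖ ^ 2 = a v v - 2 * a v (Pm v) := by
  have hPp_Pm : Pp (Pm v) = 0 := by
    simpa [hPm_idem] using hP_sum (Pm v)
  rw [ha, ha, hPp_Pm, hPm_idem, norm_sq_eq_add_of_orthogonal_projections hP_sum hP_orth,
    real_inner_self_eq_norm_sq, real_inner_self_eq_norm_sq, inner_zero_right]
  ring

theorem one_le_sq_mul_abs_of_nehari (hP_sum : ∀ v : V, Pp v + Pm v = v)
    (hPm_idem : ∀ v : V, Pm (Pm v) = Pm v) (hP_orth : ∀ v w : V, ⟪Pp v, Pm w⟫_ℝ = 0)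
    {a : V →L[ℝ] V →L[ℝ] ℝ} (ha : ∀ v w : V, a v w = ⟪Pp v, Pp w⟫_ℝ - ⟪Pm v, Pm w⟫_ℝ)
    {W : Type*} [NormedAddCommGroup W] [InnerProductSpace ℝ W] (ι : V →L[ℝ] W) {c : ℝ}
    (hιc : ∀ v : V, ‖ι v‖ ≤ c * ‖v‖) {v : V} (hv : v ≠ 0) {F : ℝ}
    (hvv : a v v = F * ⟪ι v, ι v⟫_ℝ) (hvm : a v (Pm v) = F * ⟪ι v, ι (Pm v)⟫_ℝ) :
    1 ≤ c ^ 2 * |F| := by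
  have hιz : ‖ι (v - (2 : ℝ) • Pm v)‖ ≤ c * ‖v‖ := by
    simpa only [norm_sub_two_smul_proj_eq hP_sum hP_orth] using hιc (v - (2 : ℝ) • Pm v)
  have hkey : ‖v‖ ^ 2 = F * ⟪ι v, ι (v - (2 : ℝ) • Pm v)⟫_ℝ := by
    rw [norm_sq_eq_form_sub_two_form hP_sum hPm_idem hP_orth ha, hvv, hvm, map_sub, map_smul,
      inner_sub_right, real_inner_smul_right]
    ring
  have hv_pos : 0 < ‖v‖ ^ 2 := by positivity
  have hbound : ‖v‖ ^ 2 ≤ c ^ 2 * |F| * ‖v‖ ^ 2 :=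
    calc ‖v‖ ^ 2 ≤ |F| * (‖ι v‖ * ‖ι (v - (2 : ℝ) • Pm v)‖) := by
          rw [hkey]
          exact (le_abs_self _).trans
            (by rw [abs_mul]; gcongr; exact abs_real_inner_le_norm _ _)
      _ ≤ |F| * ((c * ‖v‖) * (c * ‖v‖)) := by
          have hcv : 0 ≤ c * ‖v‖ := (norm_nonneg _).trans (hιc v)
          gcongr
          · exact hιc v
      _ = c ^ 2 * |F| * ‖v‖ ^ 2 := by ring
  nlinarith

end Projections

section SecondDerivative

variable {E : Type*} [NormedAddCommGroup E] [NormedSpace ℝ E]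

theorem abs_fderiv_apply_self_sub_le {g : E → ℝ} (hg : ContDiff ℝ 2 g) (v : E) {K : ℝ}
    (hK : ∀ t ∈ Set.Icc (0 : ℝ) 1, |fderiv ℝ (fun w => fderiv ℝ g w v) (t • v) v| ≤ K) :
    |fderiv ℝ g v v - fderiv ℝ g 0 v| ≤ K := by
  have hd : Differentiable ℝ (fun w => fderiv ℝ g w v) :=
    ((hg.fderiv_right (by norm_num)).clm_apply contDiff_const).differentiable one_ne_zero
  have hray : ∀ t ∈ Set.Icc (0 : ℝ) 1, HasDerivWithinAt (fun t : ℝ => fderiv ℝ g (t • v) v)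
      (fderiv ℝ (fun w => fderiv ℝ g w v) (t • v) v) (Set.Icc 0 1) t := fun t _ => by
    have hline : HasDerivAt (fun t : ℝ => t • v) v t := by
      simpa using (hasDerivAt_id t).smul_const v
    exact ((hd (t • v)).hasFDerivAt.comp_hasDerivAt t hline).hasDerivWithinAt
  simpa using norm_image_sub_le_of_norm_deriv_le_segment_01' hray
    (fun t ht => hK t (Set.Ico_subset_Icc_self ht))

theorem abs_le_of_hessian_le {W : Type*} [NormedAddCommGroup W] [InnerProductSpace ℝ W]
    (ι : E →L[ℝ] W) {g : E → ℝ} (hg : ContDiff ℝ 2 g) {F : ℝ → ℝ}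
    (hgrad : ∀ v h : E, fderiv ℝ g v h = F ‖ι v‖ * ⟪ι v, ι h⟫_ℝ)
    {C p : ℝ} (hC : 0 ≤ C) (hp : 1 ≤ p)
    (hII : ∀ v h k : E,
      |fderiv ℝ (fun w => fderiv ℝ g w h) v k| ≤ C * ‖ι v‖ ^ (p - 1) * ‖ι h‖ * ‖ι k‖)
    {v : E} (hv : ι v ≠ 0) :
    |F ‖ι v‖| ≤ C * ‖ι v‖ ^ (p - 1) := by
  set r := ‖ι v‖
  have hr : 0 < r := norm_pos_iff.mpr hv
  have hray : ∀ t ∈ Set.Icc (0 : ℝ) 1,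
      |fderiv ℝ (fun w => fderiv ℝ g w v) (t • v) v| ≤ C * r ^ (p - 1) * r * r := by
    intro t ht
    have htv : ‖ι (t • v)‖ ≤ r := by
      rw [map_smul, norm_smul, Real.norm_eq_abs, abs_of_nonneg ht.1]
      exact mul_le_of_le_one_left hr.le ht.2
    refine (hII _ _ _).trans ?_
    gcongr
  have hmvt := abs_fderiv_apply_self_sub_le hg v hray
  rw [hgrad, hgrad, map_zero, inner_zero_left, mul_zero, sub_zero, real_inner_self_eq_norm_sq,
    abs_mul, abs_of_nonneg (sq_nonneg r)] at hmvt
  nlinarith [mul_pos hr hr]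

end SecondDerivative

theorem exists_pos_bound_comp_norm_of_isBounded {N : Type*} [SeminormedAddCommGroup N]
    {C : ℝ → ℝ} (hC : ContinuousOn C (Set.Ici 0)) {B : Set N} (hB : Bornology.IsBounded B) :
    ∃ M, 0 < M ∧ ∀ u ∈ B, C ‖u‖ ≤ M := by
  obtain ⟨R, hR⟩ := isBounded_iff_forall_norm_le.mp hB
  obtain ⟨M, hM⟩ := isCompact_Icc.exists_bound_of_continuousOn
    (hC.mono fun _ (ht : _ ∈ Set.Icc 0 R) => ht.1)
  refine ⟨max M 1, by positivity, fun u hu => ?_⟩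
  calc C ‖u‖ ≤ ‖C ‖u‖‖ := Real.le_norm_self _
    _ ≤ max M 1 := (hM _ ⟨norm_nonneg u, hR u hu⟩).trans (le_max_left _ _)

theorem inv_rpow_inv_le_of_one_le_mul_rpow {K s p : ℝ} (hK : 0 < K) (hs : 0 ≤ s) (hp : 1 < p)
    (h : 1 ≤ K * s ^ (p - 1)) :
    K⁻¹ ^ (p - 1)⁻¹ ≤ s := by
  have hp' : 0 < p - 1 := by linarith
  calc K⁻¹ ^ (p - 1)⁻¹ ≤ (s ^ (p - 1)) ^ (p - 1)⁻¹ := by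
        gcongr
        rwa [inv_le_iff_one_le_mul₀' hK]
    _ = s := Real.rpow_rpow_inv hs hp'.ne'

theorem stmt_14_general
    {W : Type*} [NormedAddCommGroup W] [InnerProductSpace ℝ W]
    {V : Type*} [NormedAddCommGroup V] [InnerProductSpace ℝ V]
    (ι : V →L[ℝ] W) (hι : Function.Injective ι)
    (c : ℝ) (hc : 0 < c) (hιc : ∀ v : V, ‖ι v‖ ≤ c * ‖v‖)
    (Pp Pm : V →L[ℝ] V)
    (hP_sum : ∀ v : V, Pp v + Pm v = v)
    (hPm_idem : ∀ v : V, Pm (Pm v) = Pm v)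
    (hP_orth : ∀ v w : V, ⟪Pp v, Pm w⟫_ℝ = 0)
    (a : V →L[ℝ] V →L[ℝ] ℝ)
    (ha : ∀ v w : V, a v w = ⟪Pp v, Pp w⟫_ℝ - ⟪Pm v, Pm w⟫_ℝ)
    {N : Type*} [NormedAddCommGroup N] [InnerProductSpace ℝ N]
    (p : ℝ) (hp : 1 < p)
    (b : N → V → ℝ) (f : N → ℝ → ℝ)
    (hb_C2 : ContDiff ℝ 2 (fun q : N × V => b q.1 q.2))
    (hgrad : ∀ (u : N) (v h : V), fderiv ℝ (b u) v h = f u ‖ι v‖ * ⟪ι v, ι h⟫_ℝ)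
    (C₂ : ℝ → ℝ) (hC₂_cont : ContinuousOn C₂ (Set.Ici (0:ℝ)))
    (hC₂_pos : ∀ t : ℝ, 0 ≤ t → 0 < C₂ t)
    (hbII : ∀ (u : N) (v h k : V),
      |fderiv ℝ (fun w => fderiv ℝ (b u) w h) v k| ≤ C₂ ‖u‖ * ‖ι v‖ ^ (p - 1) * ‖ι h‖ * ‖ι k‖)
    :
    ∀ B : Set N, Bornology.IsBounded B →
      ∃ δ : ℝ, 0 < δ ∧ ∀ (u : N) (v : V), u ∈ B →
        Pp v ≠ 0 →
        a v v = f u ‖ι v‖ * ⟪ι v, ι v⟫_ℝ →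
        (∀ φ : V, Pm φ = φ → a v φ = f u ‖ι v‖ * ⟪ι v, ι φ⟫_ℝ) →
        δ ≤ ‖v‖ := by
  intro B hB
  obtain ⟨M, hM, hC₂_le⟩ := exists_pos_bound_comp_norm_of_isBounded hC₂_cont hB
  refine ⟨(c ^ 2 * M * c ^ (p - 1))⁻¹ ^ (p - 1)⁻¹, by positivity, ?_⟩
  intro u v hu hPpv hvv hφ
  have hv : v ≠ 0 := by rintro rfl; exact hPpv (map_zero Pp)
  have hιv : ι v ≠ 0 := (map_ne_zero_iff ι hι).mpr hv
  have hlower := one_le_sq_mul_abs_of_nehari hP_sum hPm_idem hP_orth ha ι hιc hv hvv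
    (hφ _ (hPm_idem v))
  have hupper := abs_le_of_hessian_le ι (hb_C2.comp (contDiff_const.prodMk contDiff_id))
    (hgrad u) (hC₂_pos _ (norm_nonneg u)).le hp.le (hbII u) hιv
  have hιv_rpow : ‖ι v‖ ^ (p - 1) ≤ c ^ (p - 1) * ‖v‖ ^ (p - 1) := by
    rw [← Real.mul_rpow hc.le (norm_nonneg v)]
    exact Real.rpow_le_rpow (norm_nonneg _) (hιc v) (by linarith)
  refine inv_rpow_inv_le_of_one_le_mul_rpow (by positivity) (norm_nonneg v) hp ?_
  calc 1 ≤ c ^ 2 * |f u ‖ι v‖| := hlower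
    _ ≤ c ^ 2 * (M * (c ^ (p - 1) * ‖v‖ ^ (p - 1))) := by
        gcongr
        exact hupper.trans (mul_le_mul (hC₂_le u hu) hιv_rpow (by positivity) hM.le)
    _ = c ^ 2 * M * c ^ (p - 1) * ‖v‖ ^ (p - 1) := by ring

theorem stmt_14
    {W : Type*} [NormedAddCommGroup W] [InnerProductSpace ℝ W] [CompleteSpace W]
    {V : Type*} [NormedAddCommGroup V] [InnerProductSpace ℝ V] [CompleteSpace V]
    (ι : V →L[ℝ] W) (hι : Function.Injective ι)
    (c : ℝ) (hc : 0 < c) (hιc : ∀ v : V, ‖ι v‖ ≤ c * ‖v‖)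
    (Pp Pm : V →L[ℝ] V)
    (hP_sum : ∀ v : V, Pp v + Pm v = v)
    (hPp_idem : ∀ v : V, Pp (Pp v) = Pp v)
    (hPm_idem : ∀ v : V, Pm (Pm v) = Pm v)
    (hP_orth : ∀ v w : V, ⟪Pp v, Pm w⟫_ℝ = 0)
    (a : V →L[ℝ] V →L[ℝ] ℝ)
    (ha : ∀ v w : V, a v w = ⟪Pp v, Pp w⟫_ℝ - ⟪Pm v, Pm w⟫_ℝ)
    {N : Type*} [NormedAddCommGroup N] [InnerProductSpace ℝ N] [CompleteSpace N]
    (p : ℝ) (hp : 1 < p)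
    (b : N → V → ℝ) (f : N → ℝ → ℝ)
    (hb_C2 : ContDiff ℝ 2 (fun q : N × V => b q.1 q.2))
    (hb_zero : ∀ u : N, b u 0 = 0)
    (hb_nonneg : ∀ (u : N) (v : V), 0 ≤ b u v)
    (hf_cont : ContinuousOn (fun q : N × ℝ => f q.1 q.2) (Set.univ ×ˢ Set.Ici (0:ℝ)))
    (hf_zero : ∀ u : N, f u 0 = 0)
    (hf_mono : ∀ u : N, StrictMonoOn (f u) (Set.Ici (0:ℝ)))
    (hf_nonneg : ∀ (u : N) (t : ℝ), 0 ≤ t → 0 ≤ f u t)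
    (hgrad : ∀ (u : N) (v h : V), fderiv ℝ (b u) v h = f u ‖ι v‖ * ⟪ι v, ι h⟫_ℝ)
    (C₂ : ℝ → ℝ) (hC₂_cont : ContinuousOn C₂ (Set.Ici (0:ℝ)))
    (hC₂_pos : ∀ t : ℝ, 0 ≤ t → 0 < C₂ t)
    (hbII : ∀ (u : N) (v h k : V),
      |fderiv ℝ (fun w => fderiv ℝ (b u) w h) v k| ≤ C₂ ‖u‖ * ‖ι v‖ ^ (p - 1) * ‖ι h‖ * ‖ι k‖)
    :
    ∀ B : Set N, Bornology.IsBounded B →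
      ∃ δ : ℝ, 0 < δ ∧ ∀ (u : N) (v : V), u ∈ B →
        Pp v ≠ 0 →
        a v v = f u ‖ι v‖ * ⟪ι v, ι v⟫_ℝ →
        (∀ φ : V, Pm φ = φ → a v φ = f u ‖ι v‖ * ⟪ι v, ι φ⟫_ℝ) →
        δ ≤ ‖v‖ :=
  stmt_14_general ι hι c hc hιc Pp Pm hP_sum hPm_idem hP_orth a ha p hp b f hb_C2 hgrad C₂ hC₂_cont
    hC₂_pos hbII
end

section
/- For every (u,v) ∈ 𝒩 one has ‖P⁻v‖_V ≤ ‖P⁺v‖_V, and hence ‖v‖_V² ≤ 2‖P⁺v‖_V². -/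
open scoped InnerProductSpace
open Filter Topology

theorem stmt_16
    {W : Type*} [NormedAddCommGroup W] [InnerProductSpace ℝ W] [CompleteSpace W]
    {V : Type*} [NormedAddCommGroup V] [InnerProductSpace ℝ V] [CompleteSpace V]
    (ι : V →L[ℝ] W) (hι : Function.Injective ι)
    (c : ℝ) (hc : 0 < c) (hιc : ∀ v : V, ‖ι v‖ ≤ c * ‖v‖)
    (Pp Pm : V →L[ℝ] V)
    (hP_sum : ∀ v : V, Pp v + Pm v = v)
    (hPp_idem : ∀ v : V, Pp (Pp v) = Pp v)
    (hPm_idem : ∀ v : V, Pm (Pm v) = Pm v)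
    (hP_orth : ∀ v w : V, ⟪Pp v, Pm w⟫_ℝ = 0)
    (a : V →L[ℝ] V →L[ℝ] ℝ)
    (ha : ∀ v w : V, a v w = ⟪Pp v, Pp w⟫_ℝ - ⟪Pm v, Pm w⟫_ℝ)
    {N : Type*} [NormedAddCommGroup N] [InnerProductSpace ℝ N] [CompleteSpace N]
    (p : ℝ) (hp : 1 < p)
    (b : N → V → ℝ) (f : N → ℝ → ℝ)
    (hb_C2 : ContDiff ℝ 2 (fun q : N × V => b q.1 q.2))
    (hb_zero : ∀ u : N, b u 0 = 0)
    (hb_nonneg : ∀ (u : N) (v : V), 0 ≤ b u v)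
    (hf_cont : ContinuousOn (fun q : N × ℝ => f q.1 q.2) (Set.univ ×ˢ Set.Ici (0:ℝ)))
    (hf_zero : ∀ u : N, f u 0 = 0)
    (hf_mono : ∀ u : N, StrictMonoOn (f u) (Set.Ici (0:ℝ)))
    (hf_nonneg : ∀ (u : N) (t : ℝ), 0 ≤ t → 0 ≤ f u t)
    (hgrad : ∀ (u : N) (v h : V), fderiv ℝ (b u) v h = f u ‖ι v‖ * ⟪ι v, ι h⟫_ℝ)
    :
    ∀ (u : N) (v : V), Pp v ≠ 0 →
      a v v = f u ‖ι v‖ * ⟪ι v, ι v⟫_ℝ →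
      (∀ φ : V, Pm φ = φ → a v φ = f u ‖ι v‖ * ⟪ι v, ι φ⟫_ℝ) →
      ‖Pm v‖ ≤ ‖Pp v‖ ∧ ‖v‖ ^ 2 ≤ 2 * ‖Pp v‖ ^ 2 := by
  intro u v _ hvv _
  have hav : a v v = ‖Pp v‖ ^ 2 - ‖Pm v‖ ^ 2 := by
    rw [ha]; rw [real_inner_self_eq_norm_sq, real_inner_self_eq_norm_sq]
  have hnn : 0 ≤ f u ‖ι v‖ * ⟪ι v, ι v⟫_ℝ :=
    mul_nonneg (hf_nonneg u _ (norm_nonneg _)) real_inner_self_nonneg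
  have h1 : ‖Pm v‖ ^ 2 ≤ ‖Pp v‖ ^ 2 := by
    have := hvv ▸ hav
    linarith [this]
  have hle : ‖Pm v‖ ≤ ‖Pp v‖ := by
    nlinarith [norm_nonneg (Pm v), norm_nonneg (Pp v)]
  refine ⟨hle, ?_⟩
  have hvsum : ‖v‖ ^ 2 = ‖Pp v‖ ^ 2 + ‖Pm v‖ ^ 2 := by
    have := norm_add_sq_real (Pp v) (Pm v)
    rw [hP_sum v] at this
    rw [this, hP_orth v v]; ring
  linarith
end

section
/- For every bounded set B ⊆ N there exists δ₁ > 0 such that for all u ∈ B and all v ∈ V with P⁺v ≠ 0, sup{E₂(u,w) : w ∈ F_u(v)} ≥ δ₁. -/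
/-!
Since `b u` is nonnegative and vanishes at `0`, its derivative vanishes there, so two
applications of the mean value inequality turn the bound (ii) on the second derivative into
`b u x ≤ C₂ ‖u‖ (c r)^(p-1) c² ‖x‖²` on the ball of radius `r`. As `C₂` is bounded on bounded
sets and `p > 1`, one radius `r` makes this at most `‖x‖² / 4` for all `u ∈ B`. Scaling
`P⁺ v` to norm `r` gives a point `x = t v - t P⁻ v` of `F_u(v)` with `a x x = r²`, hence
`E₂(u, x) ≥ r²/2 - r²/4`.
-/

open scoped InnerProductSpace
open Filter Topology

section MeanValue

variable {E F : Type*} [NormedAddCommGroup E] [NormedSpace ℝ E]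
  [NormedAddCommGroup F] [NormedSpace ℝ F]

theorem norm_le_mul_norm_of_norm_fderiv_le {f : E → F} {C r : ℝ} (hf : Differentiable ℝ f)
    (h0 : f 0 = 0) (hbound : ∀ y, ‖y‖ ≤ r → ‖fderiv ℝ f y‖ ≤ C) {x : E} (hx : ‖x‖ ≤ r) :
    ‖f x‖ ≤ C * ‖x‖ := by
  have hr : 0 ≤ r := (norm_nonneg x).trans hx
  have h := (convex_closedBall (0 : E) r).norm_image_sub_le_of_norm_fderiv_le
    (fun y _ => hf y) (fun y hy => hbound y (mem_closedBall_zero_iff.mp hy))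
    (Metric.mem_closedBall_self hr) (mem_closedBall_zero_iff.mpr hx)
  simpa [h0] using h

theorem norm_le_mul_norm_sq_of_norm_fderiv_le {f : E → F} {K r : ℝ} (hf : Differentiable ℝ f)
    (h0 : f 0 = 0) (hK : 0 ≤ K) (hbound : ∀ y, ‖y‖ ≤ r → ‖fderiv ℝ f y‖ ≤ K * ‖y‖) {x : E}
    (hx : ‖x‖ ≤ r) : ‖f x‖ ≤ K * ‖x‖ ^ 2 := by
  have h := norm_le_mul_norm_of_norm_fderiv_le (C := K * ‖x‖) hf h0
    (fun y hy => (hbound y (hy.trans hx)).trans (by gcongr)) le_rfl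
  rwa [mul_assoc, ← sq] at h

theorem norm_fderiv_le_of_norm_fderiv_fderiv_apply_le {g : E → F} {L r : ℝ}
    (hg : ContDiff ℝ 2 g) (hd0 : fderiv ℝ g 0 = 0) (hL : 0 ≤ L)
    (hbound : ∀ y, ‖y‖ ≤ r → ∀ h k, ‖fderiv ℝ (fun w => fderiv ℝ g w h) y k‖ ≤ L * ‖h‖ * ‖k‖)
    {x : E} (hx : ‖x‖ ≤ r) : ‖fderiv ℝ g x‖ ≤ L * ‖x‖ := by
  refine ContinuousLinearMap.opNorm_le_bound _ (by positivity) fun h => ?_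
  have hdiff : Differentiable ℝ (fun w => fderiv ℝ g w h) :=
    ((hg.fderiv_right (by norm_num)).differentiable one_ne_zero).clm_apply
      (differentiable_const h)
  have h := norm_le_mul_norm_of_norm_fderiv_le (C := L * ‖h‖) hdiff (by simp [hd0])
    (fun y hy => ContinuousLinearMap.opNorm_le_bound _ (by positivity) (hbound y hy h)) hx
  linarith

theorem norm_le_mul_norm_sq_of_norm_fderiv_fderiv_apply_le {g : E → F} {L r : ℝ}
    (hg : ContDiff ℝ 2 g) (h0 : g 0 = 0) (hd0 : fderiv ℝ g 0 = 0) (hL : 0 ≤ L)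
    (hbound : ∀ y, ‖y‖ ≤ r → ∀ h k, ‖fderiv ℝ (fun w => fderiv ℝ g w h) y k‖ ≤ L * ‖h‖ * ‖k‖)
    {x : E} (hx : ‖x‖ ≤ r) : ‖g x‖ ≤ L * ‖x‖ ^ 2 :=
  norm_le_mul_norm_sq_of_norm_fderiv_le (hg.differentiable (by norm_num)) h0 hL
    (fun _ hy => norm_fderiv_le_of_norm_fderiv_fderiv_apply_le hg hd0 hL hbound hy) hx

end MeanValue

section Splitting

variable {V : Type*} [NormedAddCommGroup V] [NormedSpace ℝ V] {Pp Pm : V →L[ℝ] V}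

theorem apply_eq_zero_of_apply_eq_self (hP_sum : ∀ v, Pp v + Pm v = v) {x : V}
    (hx : Pp x = x) : Pm x = 0 := by
  simpa [hx] using hP_sum x

theorem exists_smul_add_eq_of_ne_zero (hP_sum : ∀ v, Pp v + Pm v = v)
    (hPp_idem : ∀ v, Pp (Pp v) = Pp v) (hPm_idem : ∀ v, Pm (Pm v) = Pm v) {v : V}
    (hv : Pp v ≠ 0) {r : ℝ} (hr : 0 ≤ r) :
    ∃ (t : ℝ) (w : V), 0 ≤ t ∧ Pm w = w ∧ Pp (t • v + w) = t • v + w ∧ ‖t • v + w‖ = r := by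
  have hnv : 0 < ‖Pp v‖ := norm_pos_iff.mpr hv
  have hx : (r / ‖Pp v‖) • v + -((r / ‖Pp v‖) • Pm v) = (r / ‖Pp v‖) • Pp v := by
    rw [← sub_eq_add_neg, ← smul_sub, ← eq_sub_of_add_eq (hP_sum v)]
  refine ⟨r / ‖Pp v‖, -((r / ‖Pp v‖) • Pm v), by positivity, by simp [hPm_idem], ?_, ?_⟩
  · rw [hx, map_smul, hPp_idem]
  · rw [hx, norm_smul, Real.norm_of_nonneg (by positivity), div_mul_cancel₀ r hnv.ne']

end Splitting

section LocalBound

variable {V W : Type*} [NormedAddCommGroup V] [NormedSpace ℝ V] [NormedAddCommGroup W]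

theorem le_mul_norm_sq_of_abs_fderiv_fderiv_apply_le {g : V → ℝ} (hg : ContDiff ℝ 2 g)
    (h0 : g 0 = 0) (hg_nonneg : ∀ v, 0 ≤ g v) (ι : V → W) {c : ℝ} (hc : 0 ≤ c)
    (hιc : ∀ v, ‖ι v‖ ≤ c * ‖v‖) {p C K r : ℝ} (hp : 1 ≤ p) (hCK : |C| ≤ K)
    (hbound : ∀ x h k,
      |fderiv ℝ (fun w => fderiv ℝ g w h) x k| ≤ C * ‖ι x‖ ^ (p - 1) * ‖ι h‖ * ‖ι k‖)
    {x : V} (hx : ‖x‖ ≤ r) : g x ≤ K * (c * r) ^ (p - 1) * c ^ 2 * ‖x‖ ^ 2 := by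
  have hr : 0 ≤ r := (norm_nonneg x).trans hx
  have hmin : IsLocalMin g 0 := Filter.Eventually.of_forall fun v => h0 ▸ hg_nonneg v
  have hbound' : ∀ y, ‖y‖ ≤ r → ∀ h k,
      ‖fderiv ℝ (fun w => fderiv ℝ g w h) y k‖ ≤ K * (c * r) ^ (p - 1) * c ^ 2 * ‖h‖ * ‖k‖ := by
    intro y hy h k
    have hK : 0 ≤ K := (abs_nonneg C).trans hCK
    have hιy : ‖ι y‖ ≤ c * r := (hιc y).trans (by gcongr)
    have hιh := hιc h
    have hιk := hιc k
    calc ‖fderiv ℝ (fun w => fderiv ℝ g w h) y k‖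
        ≤ C * ‖ι y‖ ^ (p - 1) * ‖ι h‖ * ‖ι k‖ := (Real.norm_eq_abs _).trans_le (hbound y h k)
      _ ≤ |C| * ‖ι y‖ ^ (p - 1) * ‖ι h‖ * ‖ι k‖ := by gcongr; exact le_abs_self C
      _ ≤ K * (c * r) ^ (p - 1) * (c * ‖h‖) * (c * ‖k‖) := by gcongr
      _ = K * (c * r) ^ (p - 1) * c ^ 2 * ‖h‖ * ‖k‖ := by ring
  have hL : 0 ≤ K * (c * r) ^ (p - 1) * c ^ 2 :=
    mul_nonneg (mul_nonneg ((abs_nonneg C).trans hCK) (by positivity)) (sq_nonneg c)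
  exact (le_abs_self _).trans (norm_le_mul_norm_sq_of_norm_fderiv_fderiv_apply_le hg h0
    hmin.fderiv_eq_zero hL hbound' hx)

theorem exists_mul_rpow_mul_sq_le (K c : ℝ) {q ε : ℝ} (hq : 0 < q) (hε : 0 < ε) :
    ∃ r, K * (c * r) ^ q * c ^ 2 ≤ ε ∧ 0 < r := by
  have hcont : ContinuousAt (fun r => K * (c * r) ^ q * c ^ 2) 0 :=
    (continuousAt_const.mul ((Real.continuousAt_rpow_const _ _ (Or.inr hq.le)).comp
      (continuousAt_const.mul continuousAt_id))).mul continuousAt_const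
  have hlim : Tendsto (fun r => K * (c * r) ^ q * c ^ 2) (𝓝[>] 0) (𝓝 0) := by
    simpa [Real.zero_rpow hq.ne'] using hcont.tendsto.mono_left nhdsWithin_le_nhds
  exact ((hlim.eventually (ge_mem_nhds hε)).and self_mem_nhdsWithin).exists

end LocalBound

theorem stmt_17_general
    {W : Type*} [NormedAddCommGroup W] [InnerProductSpace ℝ W]
    {V : Type*} [NormedAddCommGroup V] [InnerProductSpace ℝ V]
    (ι : V →L[ℝ] W)
    (c : ℝ) (hc : 0 < c) (hιc : ∀ v : V, ‖ι v‖ ≤ c * ‖v‖)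
    (Pp Pm : V →L[ℝ] V)
    (hP_sum : ∀ v : V, Pp v + Pm v = v)
    (hPp_idem : ∀ v : V, Pp (Pp v) = Pp v)
    (hPm_idem : ∀ v : V, Pm (Pm v) = Pm v)
    (a : V →L[ℝ] V →L[ℝ] ℝ)
    (ha : ∀ v w : V, a v w = ⟪Pp v, Pp w⟫_ℝ - ⟪Pm v, Pm w⟫_ℝ)
    {N : Type*} [NormedAddCommGroup N] [InnerProductSpace ℝ N]
    (p : ℝ) (hp : 1 < p)
    (b : N → V → ℝ)
    (hb_C2 : ContDiff ℝ 2 (fun q : N × V => b q.1 q.2))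
    (hb_zero : ∀ u : N, b u 0 = 0)
    (hb_nonneg : ∀ (u : N) (v : V), 0 ≤ b u v)
    (C₂ : ℝ → ℝ) (hC₂_cont : ContinuousOn C₂ (Set.Ici (0:ℝ)))
    (hbII : ∀ (u : N) (v h k : V),
      |fderiv ℝ (fun w => fderiv ℝ (b u) w h) v k| ≤ C₂ ‖u‖ * ‖ι v‖ ^ (p - 1) * ‖ι h‖ * ‖ι k‖)
    :
    ∀ B : Set N, Bornology.IsBounded B →
      ∃ δ₁ : ℝ, 0 < δ₁ ∧ ∀ (u : N), u ∈ B → ∀ v : V, Pp v ≠ 0 →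
        ∃ (t : ℝ) (w : V), 0 ≤ t ∧ Pm w = w ∧
          δ₁ ≤ (1/2 : ℝ) * a (t • v + w) (t • v + w) - b u (t • v + w) := by
  intro B hB
  obtain ⟨R, hR⟩ := hB.exists_norm_le
  obtain ⟨K, hK⟩ := (isCompact_Icc (a := 0) (b := R)).exists_bound_of_continuousOn
    (hC₂_cont.mono Set.Icc_subset_Ici_self)
  obtain ⟨r, hrK, hr⟩ :=
    exists_mul_rpow_mul_sq_le K c (sub_pos.mpr hp) (by norm_num : (0 : ℝ) < 1 / 4)
  refine ⟨r ^ 2 / 4, by positivity, fun u hu v hv => ?_⟩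
  obtain ⟨t, w, ht, hw, hPx, hx⟩ :=
    exists_smul_add_eq_of_ne_zero hP_sum hPp_idem hPm_idem hv hr.le
  have hbx := le_mul_norm_sq_of_abs_fderiv_fderiv_apply_le (g := b u)
    (hb_C2.comp (contDiff_const.prodMk contDiff_id)) (hb_zero u) (hb_nonneg u) ι hc.le hιc hp.le
    (hK _ ⟨norm_nonneg u, hR u hu⟩) (hbII u) hx.le
  have hax : a (t • v + w) (t • v + w) = r ^ 2 := by
    rw [ha, hPx, apply_eq_zero_of_apply_eq_self hP_sum hPx, inner_zero_left, sub_zero,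
      real_inner_self_eq_norm_sq, hx]
  refine ⟨t, w, ht, hw, ?_⟩
  have hbx' : b u (t • v + w) ≤ 1 / 4 * r ^ 2 := hx ▸ hbx.trans (by gcongr)
  rw [hax]
  linarith

theorem stmt_17
    {W : Type*} [NormedAddCommGroup W] [InnerProductSpace ℝ W] [CompleteSpace W]
    {V : Type*} [NormedAddCommGroup V] [InnerProductSpace ℝ V] [CompleteSpace V]
    (ι : V →L[ℝ] W) (hι : Function.Injective ι)
    (c : ℝ) (hc : 0 < c) (hιc : ∀ v : V, ‖ι v‖ ≤ c * ‖v‖)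
    (Pp Pm : V →L[ℝ] V)
    (hP_sum : ∀ v : V, Pp v + Pm v = v)
    (hPp_idem : ∀ v : V, Pp (Pp v) = Pp v)
    (hPm_idem : ∀ v : V, Pm (Pm v) = Pm v)
    (hP_orth : ∀ v w : V, ⟪Pp v, Pm w⟫_ℝ = 0)
    (a : V →L[ℝ] V →L[ℝ] ℝ)
    (ha : ∀ v w : V, a v w = ⟪Pp v, Pp w⟫_ℝ - ⟪Pm v, Pm w⟫_ℝ)
    {N : Type*} [NormedAddCommGroup N] [InnerProductSpace ℝ N] [CompleteSpace N]
    (p : ℝ) (hp : 1 < p)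
    (b : N → V → ℝ) (f : N → ℝ → ℝ)
    (hb_C2 : ContDiff ℝ 2 (fun q : N × V => b q.1 q.2))
    (hb_zero : ∀ u : N, b u 0 = 0)
    (hb_nonneg : ∀ (u : N) (v : V), 0 ≤ b u v)
    (hf_cont : ContinuousOn (fun q : N × ℝ => f q.1 q.2) (Set.univ ×ˢ Set.Ici (0:ℝ)))
    (hf_zero : ∀ u : N, f u 0 = 0)
    (hf_mono : ∀ u : N, StrictMonoOn (f u) (Set.Ici (0:ℝ)))
    (hf_nonneg : ∀ (u : N) (t : ℝ), 0 ≤ t → 0 ≤ f u t)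
    (hgrad : ∀ (u : N) (v h : V), fderiv ℝ (b u) v h = f u ‖ι v‖ * ⟪ι v, ι h⟫_ℝ)
    (C₂ : ℝ → ℝ) (hC₂_cont : ContinuousOn C₂ (Set.Ici (0:ℝ)))
    (hC₂_pos : ∀ t : ℝ, 0 ≤ t → 0 < C₂ t)
    (hbII : ∀ (u : N) (v h k : V),
      |fderiv ℝ (fun w => fderiv ℝ (b u) w h) v k| ≤ C₂ ‖u‖ * ‖ι v‖ ^ (p - 1) * ‖ι h‖ * ‖ι k‖)
    :
    ∀ B : Set N, Bornology.IsBounded B →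
      ∃ δ₁ : ℝ, 0 < δ₁ ∧ ∀ (u : N), u ∈ B → ∀ v : V, Pp v ≠ 0 →
        ∃ (t : ℝ) (w : V), 0 ≤ t ∧ Pm w = w ∧
          δ₁ ≤ (1/2 : ℝ) * a (t • v + w) (t • v + w) - b u (t • v + w) :=
  stmt_17_general ι c hc hιc Pp Pm hP_sum hPp_idem hPm_idem a ha p hp b hb_C2 hb_zero hb_nonneg C₂
    hC₂_cont hbII
end
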